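/- arXiv:2505.20484 — 13 statements merged into one kernel-verified Lean document; each statement's English description precedes it below -/
import Mathlib

section
/- Let q > 2 and set σ̂_q = (1/2)^{(3q−2)/2}. Then for all x, y ∈ ℝ^n and all λ ∈ [0,1], one has ‖λx + (1−λ)y‖^q ≤ λ‖x‖^q + (1−λ)‖y‖^q − λ(1−λ)·σ̂_q·‖x − y‖^q; in particular, x ↦ ‖x‖^q is uniformly convex on ℝ^n with modulus φ(t) = σ̂_q t^q. -/
noncomputable section

open Set

/-- `f` is uniformly convex on `C` with modulus `φ` (extended-real-valued). -/
def UnifConvexOn {E : Type*} [NormedAddCommGroup E] [NormedSpace ℝ E]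
    (C : Set E) (φ : ℝ → EReal) (f : E → EReal) : Prop :=
  ∀ ⦃x⦄, x ∈ C → ∀ ⦃y⦄, y ∈ C → ∀ ⦃l : ℝ⦄, l ∈ Set.Icc (0 : ℝ) 1 →
    f (l • x + (1 - l) • y) + ((l * (1 - l) : ℝ) : EReal) * φ ‖x - y‖
      ≤ ((l : ℝ) : EReal) * f x + ((1 - l : ℝ) : EReal) * f y

lemma supadd {p : ℝ} (hp : 1 ≤ p) {u v : ℝ} (hu : 0 ≤ u) (hv : 0 ≤ v) :
    u ^ p + v ^ p ≤ (u + v) ^ p := by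
  have h := NNReal.add_rpow_le_rpow_add (Real.toNNReal u) (Real.toNNReal v) hp
  have h2 := NNReal.coe_le_coe.2 h
  simpa [NNReal.coe_rpow, Real.coe_toNNReal u hu, Real.coe_toNNReal v hv,
    ← Real.toNNReal_add hu hv, sup_eq_left.mpr (add_nonneg hu hv)] using h2

lemma mid {E : Type*} [NormedAddCommGroup E] [InnerProductSpace ℝ E] {q : ℝ}
    (hq : 2 ≤ q) (x y : E) :
    ‖((1:ℝ)/2) • (x + y)‖ ^ q
      ≤ (‖x‖ ^ q + ‖y‖ ^ q) / 2 - ((1:ℝ)/2) ^ q * ‖x - y‖ ^ q := by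
  set u := ((1:ℝ)/2) • (x + y) with hu
  set v := ((1:ℝ)/2) • (x - y) with hv
  have hx : u + v = x := by rw [hu, hv]; module
  have hy : u - v = y := by rw [hu, hv]; module
  have h2 : ∀ a : ℝ, a ^ (2:ℝ) = a * a := fun a => by
    rw [show (2:ℝ) = ((2:ℕ):ℝ) by norm_num, Real.rpow_natCast]; ring
  have hpar : ‖u‖ ^ (2:ℝ) + ‖v‖ ^ (2:ℝ) = (‖x‖ ^ (2:ℝ) + ‖y‖ ^ (2:ℝ)) / 2 := by
    have := parallelogram_law_with_norm ℝ u v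
    rw [hx, hy] at this
    simp only [h2]; linarith
  have hq2 : 1 ≤ q / 2 := by linarith
  have hA : ∀ a : ℝ, 0 ≤ a → a ^ q = (a ^ (2:ℝ)) ^ (q/2) := fun a ha => by
    rw [← Real.rpow_mul ha]; congr 1; ring
  have hsup : ‖u‖ ^ q + ‖v‖ ^ q ≤ (‖u‖ ^ (2:ℝ) + ‖v‖ ^ (2:ℝ)) ^ (q/2) := by
    rw [hA _ (norm_nonneg u), hA _ (norm_nonneg v)]
    exact supadd hq2 (Real.rpow_nonneg (norm_nonneg _) _) (Real.rpow_nonneg (norm_nonneg _) _)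
  have hconv : ((‖x‖ ^ (2:ℝ) + ‖y‖ ^ (2:ℝ)) / 2) ^ (q/2)
      ≤ (‖x‖ ^ q + ‖y‖ ^ q) / 2 := by
    have hx2 : ‖x‖ ^ (2:ℝ) ∈ Set.Ici (0:ℝ) := Set.mem_Ici.2 (Real.rpow_nonneg (norm_nonneg x) 2)
    have hy2 : ‖y‖ ^ (2:ℝ) ∈ Set.Ici (0:ℝ) := Set.mem_Ici.2 (Real.rpow_nonneg (norm_nonneg y) 2)
    have hc := (convexOn_rpow hq2).2 hx2 hy2
      (by norm_num : (0:ℝ) ≤ 1/2) (by norm_num : (0:ℝ) ≤ 1/2) (by norm_num)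
    simp only [smul_eq_mul] at hc
    calc ((‖x‖ ^ (2:ℝ) + ‖y‖ ^ (2:ℝ)) / 2) ^ (q/2)
        = (1/2 * ‖x‖ ^ (2:ℝ) + 1/2 * ‖y‖ ^ (2:ℝ)) ^ (q/2) := by ring_nf
      _ ≤ 1/2 * (‖x‖ ^ (2:ℝ)) ^ (q/2) + 1/2 * (‖y‖ ^ (2:ℝ)) ^ (q/2) := hc
      _ = (‖x‖ ^ q + ‖y‖ ^ q) / 2 := by
          rw [← hA _ (norm_nonneg x), ← hA _ (norm_nonneg y)]; ring
  have hvnorm : ‖v‖ ^ q = ((1:ℝ)/2) ^ q * ‖x - y‖ ^ q := by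
    rw [hv, norm_smul, Real.norm_eq_abs, abs_of_nonneg (by norm_num : (0:ℝ) ≤ 1/2),
      Real.mul_rpow (by norm_num) (norm_nonneg _)]
  rw [hpar] at hsup
  linarith [hsup.trans hconv, hvnorm ▸ (le_refl (‖v‖ ^ q))]

lemma key {E : Type*} [NormedAddCommGroup E] [InnerProductSpace ℝ E] {q : ℝ}
    (hq : 2 < q) (x y : E) {l : ℝ} (h0 : 0 ≤ l) (h12 : l ≤ 1/2) :
    ‖l • x + (1 - l) • y‖ ^ q
      ≤ l * ‖x‖ ^ q + (1 - l) * ‖y‖ ^ q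
        - l * (1 - l) * (((1:ℝ)/2) ^ ((3 * q - 2) / 2)) * ‖x - y‖ ^ q := by
  have hq1 : (1:ℝ) ≤ q := by linarith
  set M := ((1:ℝ)/2) • (x + y) with hM
  have hz : l • x + (1 - l) • y = (2*l) • M + (1 - 2*l) • y := by rw [hM]; module
  have hnorm : ‖l • x + (1 - l) • y‖ ≤ (2*l) * ‖M‖ + (1 - 2*l) * ‖y‖ := by
    rw [hz]
    calc ‖(2*l) • M + (1 - 2*l) • y‖ ≤ ‖(2*l) • M‖ + ‖(1 - 2*l) • y‖ := norm_add_le _ _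
      _ = (2*l) * ‖M‖ + (1 - 2*l) * ‖y‖ := by
          simp [norm_smul, Real.norm_eq_abs, abs_of_nonneg (show (0:ℝ) ≤ 2*l by linarith),
            abs_of_nonneg (show (0:ℝ) ≤ 1 - 2*l by linarith), abs_of_nonneg h0]
  have hmono : ‖l • x + (1 - l) • y‖ ^ q ≤ ((2*l) * ‖M‖ + (1 - 2*l) * ‖y‖) ^ q :=
    Real.rpow_le_rpow (norm_nonneg _) hnorm (by linarith)
  have hMmem : ‖M‖ ∈ Set.Ici (0:ℝ) := Set.mem_Ici.2 (norm_nonneg M)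
  have hymem : ‖y‖ ∈ Set.Ici (0:ℝ) := Set.mem_Ici.2 (norm_nonneg y)
  have hconv := (convexOn_rpow hq1).2 hMmem hymem
    (by linarith : (0:ℝ) ≤ 2*l) (by linarith : (0:ℝ) ≤ 1 - 2*l) (by ring)
  simp only [smul_eq_mul] at hconv
  have hmid := mid (le_of_lt hq) x y
  rw [← hM] at hmid
  -- constants
  have hσ : ((1:ℝ)/2) ^ ((3 * q - 2) / 2) ≤ 2 * ((1:ℝ)/2) ^ q := by
    have h1 : ((1:ℝ)/2) ^ ((3 * q - 2) / 2) ≤ ((1:ℝ)/2) ^ (q - 1) :=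
      Real.rpow_le_rpow_of_exponent_ge (by norm_num) (by norm_num) (by linarith)
    have h2 : ((1:ℝ)/2) ^ (q - 1) = 2 * ((1:ℝ)/2) ^ q := by
      rw [Real.rpow_sub (by norm_num : (0:ℝ) < 1/2), Real.rpow_one]; ring
    linarith
  have hD : (0:ℝ) ≤ ‖x - y‖ ^ q := Real.rpow_nonneg (norm_nonneg _) _
  have hconst : l * (1 - l) * (((1:ℝ)/2) ^ ((3 * q - 2) / 2)) * ‖x - y‖ ^ q
      ≤ 2 * l * (((1:ℝ)/2) ^ q * ‖x - y‖ ^ q) := by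
    have hσ0 : (0:ℝ) ≤ ((1:ℝ)/2) ^ ((3 * q - 2) / 2) := Real.rpow_nonneg (by norm_num) _
    have t1 : l * (1 - l) * (((1:ℝ)/2) ^ ((3 * q - 2) / 2)) * ‖x - y‖ ^ q
        ≤ l * (((1:ℝ)/2) ^ ((3 * q - 2) / 2)) * ‖x - y‖ ^ q := by
      nlinarith [mul_nonneg (mul_nonneg (mul_nonneg h0 h0) hσ0) hD]
    have t2 : l * (((1:ℝ)/2) ^ ((3 * q - 2) / 2)) * ‖x - y‖ ^ q
        ≤ l * (2 * ((1:ℝ)/2) ^ q) * ‖x - y‖ ^ q :=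
      mul_le_mul_of_nonneg_right (mul_le_mul_of_nonneg_left hσ h0) hD
    have t3 : l * (2 * ((1:ℝ)/2) ^ q) * ‖x - y‖ ^ q = 2 * l * (((1:ℝ)/2) ^ q * ‖x - y‖ ^ q) := by
      ring
    linarith
  have h2l : (0:ℝ) ≤ 2*l := by linarith
  nlinarith [mul_le_mul_of_nonneg_left hmid h2l]

theorem main_ineq (n : ℕ) (q : ℝ) (hq : 2 < q)
    (x y : EuclideanSpace ℝ (Fin n)) (l : ℝ) (hl : l ∈ Set.Icc (0 : ℝ) 1) :
    ‖l • x + (1 - l) • y‖ ^ q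
      ≤ l * ‖x‖ ^ q + (1 - l) * ‖y‖ ^ q
        - l * (1 - l) * (((1 : ℝ) / 2) ^ ((3 * q - 2) / 2)) * ‖x - y‖ ^ q := by
  obtain ⟨h0, h1⟩ := hl
  rcases le_or_gt l (1/2) with h | h
  · exact key hq x y h0 h
  · have := key hq y x (by linarith : (0:ℝ) ≤ 1 - l) (by linarith : 1 - l ≤ 1/2)
    have e : (1:ℝ) - (1 - l) = l := by ring
    rw [e, norm_sub_rev y x, add_comm] at this
    linarith

/-- For `q > 2` and `σ̂_q = (1/2)^((3q-2)/2)`, for all `x, y ∈ ℝⁿ` and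
`λ ∈ [0,1]` one has
`‖λx + (1-λ)y‖^q ≤ λ‖x‖^q + (1-λ)‖y‖^q − λ(1-λ)·σ̂_q·‖x−y‖^q`; in particular,
`x ↦ ‖x‖^q` is uniformly convex on `ℝⁿ` with modulus `φ(t) = σ̂_q t^q`. -/
theorem statement_0 (n : ℕ) (q : ℝ) (hq : 2 < q) :
    (∀ (x y : EuclideanSpace ℝ (Fin n)) (l : ℝ), l ∈ Set.Icc (0 : ℝ) 1 →
      ‖l • x + (1 - l) • y‖ ^ q
        ≤ l * ‖x‖ ^ q + (1 - l) * ‖y‖ ^ q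
          - l * (1 - l) * (((1 : ℝ) / 2) ^ ((3 * q - 2) / 2)) * ‖x - y‖ ^ q) ∧
    UnifConvexOn (Set.univ : Set (EuclideanSpace ℝ (Fin n)))
      (fun t : ℝ => (((((1 : ℝ) / 2) ^ ((3 * q - 2) / 2)) * t ^ q : ℝ) : EReal))
      (fun x => ((‖x‖ ^ q : ℝ) : EReal)) := by
  refine ⟨main_ineq n q hq, ?_⟩
  intro x _ y _ l hl
  simp only
  have h := main_ineq n q hq x y l hl
  rw [← EReal.coe_mul, ← EReal.coe_mul, ← EReal.coe_mul, ← EReal.coe_add, ← EReal.coe_add, EReal.coe_le_coe_iff]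
  nlinarith [h]
end
end

section
/- Let h, g : ℝ^n → ℝ with g(x) > 0 for all x and g bounded above by M > 0, and suppose h is uniformly convex on ℝ^n with modulus φ. If any of the following holds: (a) g is affine; (b) h is nonnegative and g is concave; (c) h is nonpositive and g is convex; then the function x ↦ h(x)/g(x) is uniformly quasiconvex on ℝ^n with modulus φ/M. -/
noncomputable section

open Set

/-- `φ : [0,∞) → [0,∞]` is a modulus: increasing and vanishing only at `0`. -/
def IsModulus (φ : ℝ → EReal) : Prop :=
  (∀ ⦃s t : ℝ⦄, 0 ≤ s → s ≤ t → φ s ≤ φ t) ∧ φ 0 = 0 ∧ (∀ t : ℝ, 0 < t → 0 < φ t)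

/-- `f` is uniformly quasiconvex on `C` with modulus `φ`. -/
def UnifQuasiconvexOn {E : Type*} [NormedAddCommGroup E] [NormedSpace ℝ E]
    (C : Set E) (φ : ℝ → EReal) (f : E → EReal) : Prop :=
  ∀ ⦃x⦄, x ∈ C → ∀ ⦃y⦄, y ∈ C → ∀ ⦃l : ℝ⦄, l ∈ Set.Icc (0 : ℝ) 1 →
    f (l • x + (1 - l) • y) + ((l * (1 - l) : ℝ) : EReal) * φ ‖x - y‖ ≤ max (f x) (f y)

/-- If `h` is uniformly convex with modulus `φ`, `g > 0` is bounded above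
by `M > 0`, and one of the three structural conditions on `h, g` holds, then `h/g` is
uniformly quasiconvex with modulus `φ/M`. -/
theorem statement_1 (n : ℕ) (h g : EuclideanSpace ℝ (Fin n) → ℝ) (M : ℝ) (hM : 0 < M)
    (hg_pos : ∀ x, 0 < g x) (hg_bdd : ∀ x, g x ≤ M)
    (φ : ℝ → EReal) (hφ : IsModulus φ)
    (hconv : UnifConvexOn (Set.univ : Set (EuclideanSpace ℝ (Fin n))) φ
      (fun x => ((h x : ℝ) : EReal)))
    (hcase :
      (∃ (A : EuclideanSpace ℝ (Fin n) →ₗ[ℝ] ℝ) (b : ℝ), ∀ x, g x = A x + b)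
      ∨ ((∀ x, 0 ≤ h x) ∧ ConcaveOn ℝ Set.univ g)
      ∨ ((∀ x, h x ≤ 0) ∧ ConvexOn ℝ Set.univ g)) :
    UnifQuasiconvexOn (Set.univ : Set (EuclideanSpace ℝ (Fin n)))
      (fun t : ℝ => ((M⁻¹ : ℝ) : EReal) * φ t)
      (fun x => ((h x / g x : ℝ) : EReal)) := by
  obtain ⟨hφ_mono, hφ0, _⟩ := hφ
  intro x _ y _ l hl
  obtain ⟨hl0, hl1⟩ := hl
  have hφnn : (0 : EReal) ≤ φ ‖x - y‖ := by
    rw [← hφ0]; exact hφ_mono le_rfl (norm_nonneg _)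
  rcases eq_or_lt_of_le hl0 with h0 | h0
  · simp only [← h0, zero_smul, zero_add, sub_zero, one_smul, zero_mul, EReal.coe_zero,
      add_zero]
    exact le_max_right _ _
  rcases eq_or_lt_of_le hl1 with h1 | h1
  · simp only [h1, one_smul, sub_self, zero_smul, add_zero, mul_zero, EReal.coe_zero,
      zero_mul]
    exact le_max_left _ _
  set c := l * (1 - l) with hcdef
  have hcpos : 0 < c := mul_pos h0 (by linarith)
  have hkey := hconv (mem_univ x) (mem_univ y) ⟨hl0, hl1⟩
  simp only at hkey
  set z := l • x + (1 - l) • y with hz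
  have hφne_top : φ ‖x - y‖ ≠ ⊤ := by
    intro htop
    rw [htop, EReal.coe_mul_top_of_pos hcpos, EReal.add_top_of_ne_bot (EReal.coe_ne_bot _)]
      at hkey
    rw [← EReal.coe_mul, ← EReal.coe_mul, ← EReal.coe_add, top_le_iff] at hkey
    exact EReal.coe_ne_top _ hkey
  have hφne_bot : φ ‖x - y‖ ≠ ⊥ := ne_of_gt (lt_of_lt_of_le EReal.bot_lt_zero hφnn)
  set p := (φ ‖x - y‖).toReal with hpdef
  have hp : φ ‖x - y‖ = (p : EReal) := (EReal.coe_toReal hφne_top hφne_bot).symm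
  have hp0 : 0 ≤ p := by
    have := hφnn; rw [hp] at this; exact_mod_cast this
  rw [hp] at hkey
  have hkeyR : h z + c * p ≤ l * h x + (1 - l) * h y := by exact_mod_cast hkey
  set m := max (h x / g x) (h y / g y) with hmdef
  have hxm : h x ≤ m * g x := by
    rw [← div_le_iff₀ (hg_pos x)]; exact le_max_left _ _
  have hym : h y ≤ m * g y := by
    rw [← div_le_iff₀ (hg_pos y)]; exact le_max_right _ _
  have hsum : l * h x + (1 - l) * h y ≤ m * (l * g x + (1 - l) * g y) := by
    nlinarith [hxm, hym]
  have hgz : m * (l * g x + (1 - l) * g y) ≤ m * g z := by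
    rcases hcase with ⟨A, b, hA⟩ | ⟨hh, hgc⟩ | ⟨hh, hgc⟩
    · have : g z = l * g x + (1 - l) * g y := by
        simp only [hA, hz, map_add, map_smul, smul_eq_mul]; ring
      rw [this]
    · have hm0 : 0 ≤ m := le_trans (div_nonneg (hh x) (hg_pos x).le) (le_max_left _ _)
      have := hgc.2 (mem_univ x) (mem_univ y) hl0 (show (0:ℝ) ≤ 1 - l by linarith) (by ring)
      simp only [smul_eq_mul] at this
      nlinarith
    · have hm0 : m ≤ 0 := by
        apply max_le <;> exact div_nonpos_of_nonpos_of_nonneg (hh _) (hg_pos _).le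
      have := hgc.2 (mem_univ x) (mem_univ y) hl0 (show (0:ℝ) ≤ 1 - l by linarith) (by ring)
      simp only [smul_eq_mul] at this
      nlinarith
  have hkey2 : h z + c * p ≤ m * g z := le_trans hkeyR (le_trans hsum hgz)
  have hMinv : M⁻¹ ≤ (g z)⁻¹ := inv_anti₀ (hg_pos z) (hg_bdd z)
  have hfinal : h z / g z + c * (M⁻¹ * p) ≤ m := by
    have h1 : h z / g z = h z * (g z)⁻¹ := div_eq_mul_inv _ _
    rw [h1]
    have h2 : h z * (g z)⁻¹ ≤ m - c * p * (g z)⁻¹ := by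
      have h4 := mul_le_mul_of_nonneg_right hkey2 (inv_pos.2 (hg_pos z)).le
      have h6 : m * g z * (g z)⁻¹ = m := by
        rw [mul_assoc, mul_inv_cancel₀ (hg_pos z).ne', mul_one]
      rw [h6, add_mul] at h4
      linarith
    have h3 : c * (M⁻¹ * p) ≤ c * p * (g z)⁻¹ := by
      nlinarith [mul_nonneg hcpos.le hp0]
    linarith
  calc ((h z / g z : ℝ) : EReal) + ((c : ℝ) : EReal) * (((M⁻¹ : ℝ) : EReal) * φ ‖x - y‖)
      = ((h z / g z + c * (M⁻¹ * p) : ℝ) : EReal) := by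
        rw [hp, ← EReal.coe_mul, ← EReal.coe_mul, ← EReal.coe_add]
    _ ≤ ((m : ℝ) : EReal) := EReal.coe_le_coe_iff.2 hfinal
    _ = max _ _ := by
        rw [hmdef]
        exact Monotone.map_max (fun _ _ hab => EReal.coe_le_coe_iff.2 hab)
end
end

section
/- Let f : ℝ^n → ℝ^m and h : ℝ^m → ℝ ∪ {+∞} be such that (f, h) is a convex-pair with respect to a convex set C ⊆ ℝ^n with f(C) ⊆ dom h, i.e., h(f(λx + (1−λ)y)) ≤ h(λf(x) + (1−λ)f(y)) for all x, y ∈ C and λ ∈ (0,1). If h is uniformly quasiconvex on ℝ^m (restricted to its domain) with modulus φ, and f is uniformly regular on C with modulus ϑ, i.e., ϑ(‖x − y‖) ≤ ‖f(x) − f(y)‖ for all x, y ∈ C, then the composite function x ↦ h(f(x)) is uniformly quasiconvex on C with modulus φ ∘ ϑ. -/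
noncomputable section

open Set

/-- A real-valued modulus: increasing and vanishing only at `0`. -/
def IsRealModulus (ϑ : ℝ → ℝ) : Prop :=
  (∀ ⦃s t : ℝ⦄, 0 ≤ s → s ≤ t → ϑ s ≤ ϑ t) ∧ ϑ 0 = 0 ∧ (∀ t : ℝ, 0 < t → 0 < ϑ t)

/-- If `(f, h)` is a convex-pair with respect to a convex set `C` with
`f(C) ⊆ dom h`, `h` is uniformly quasiconvex on its domain with modulus `φ`, and `f` is
uniformly regular on `C` with modulus `ϑ`, then `h ∘ f` is uniformly quasiconvex on `C`
with modulus `φ ∘ ϑ`. -/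
theorem statement_2 (n m : ℕ)
    (f : EuclideanSpace ℝ (Fin n) → EuclideanSpace ℝ (Fin m))
    (h : EuclideanSpace ℝ (Fin m) → EReal)
    (C : Set (EuclideanSpace ℝ (Fin n))) (hCconv : Convex ℝ C)
    (φ : ℝ → EReal) (hφ : IsModulus φ)
    (ϑ : ℝ → ℝ) (hϑ : IsRealModulus ϑ)
    (hdomconv : Convex ℝ {y | h y ≠ ⊤})
    (hrange : ∀ x ∈ C, h (f x) ≠ ⊤)
    (hpair : ∀ x ∈ C, ∀ y ∈ C, ∀ l : ℝ, l ∈ Set.Ioo (0 : ℝ) 1 →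
      h (f (l • x + (1 - l) • y)) ≤ h (l • f x + (1 - l) • f y))
    (hquasi : UnifQuasiconvexOn {y | h y ≠ ⊤} φ h)
    (hreg : ∀ x ∈ C, ∀ y ∈ C, ϑ ‖x - y‖ ≤ ‖f x - f y‖) :
    UnifQuasiconvexOn C (fun t : ℝ => φ (ϑ t)) (fun x => h (f x)) := by
  intro x hx y hy l hl
  rcases eq_or_lt_of_le hl.1 with h0 | h0
  · simp only [← h0]
    norm_num
  rcases eq_or_lt_of_le hl.2 with h1 | h1
  · simp only [h1]
    norm_num
  have hlI : l ∈ Set.Ioo (0:ℝ) 1 := ⟨h0, h1⟩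
  have hfx : f x ∈ {y | h y ≠ ⊤} := hrange x hx
  have hfy : f y ∈ {y | h y ≠ ⊤} := hrange y hy
  have key := hquasi hfx hfy hl
  have hϑ0 : (0:ℝ) ≤ ϑ ‖x - y‖ := by
    have := hϑ.1 (le_refl 0) (norm_nonneg (x - y))
    rwa [hϑ.2.1] at this
  have hmono : φ (ϑ ‖x - y‖) ≤ φ ‖f x - f y‖ := hφ.1 hϑ0 (hreg x hx y hy)
  have hc : (0:EReal) ≤ ((l * (1 - l) : ℝ) : EReal) := by
    have : (0:ℝ) ≤ l * (1-l) := mul_nonneg hl.1 (by linarith [hl.2])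
    exact_mod_cast this
  calc h (f (l • x + (1 - l) • y)) + ((l * (1 - l) : ℝ) : EReal) * φ (ϑ ‖x - y‖)
      ≤ h (l • f x + (1 - l) • f y) + ((l * (1 - l) : ℝ) : EReal) * φ ‖f x - f y‖ :=
        add_le_add (hpair x hx y hy l hlI) (mul_le_mul_of_nonneg_left hmono hc)
    _ ≤ max (h (f x)) (h (f y)) := key
end
end

section
/- Let h : ℝ^n → ℝ ∪ {+∞} be a proper function with convex domain whose interior is nonempty, and suppose h is uniformly quasiconvex on dom h with modulus φ. Let m ∈ ℕ with m ≥ 2, and assume that for each y ∈ ℝ^n, liminf_{‖x‖→+∞} φ(‖x − y‖)/‖x‖^m > 0. Then h is m-supercoercive, i.e., liminf_{‖x‖→+∞} h(x)/‖x‖^m > 0. -/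
/-!
The sublevel sets `{h ≤ k}` of a uniformly quasiconvex function are convex and cover `dom h`, so by
Baire one of them has nonempty interior: `h ≤ k` on a ball `B(z, ρ)`. Writing `z` as a convex
combination of a far point `x` and a point of that ball, with weight `≈ ρ / ‖x - z‖` on `x`, the
growth `φ t ≳ t ^ m` with `m ≥ 2` forces `h x ≥ h z` far from `z`. The midpoint inequality for `x`
and `z` then gives `h x ≥ h z + φ ‖x - z‖ / 4 ≳ ‖x‖ ^ m`.
-/

noncomputable section

open Set Filter

theorem EReal.coe_le_coe_inv_mul_iff {r e : ℝ} (hr : 0 < r) {y : EReal} :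
    (e : EReal) ≤ ((r⁻¹ : ℝ) : EReal) * y ↔ ((e * r : ℝ) : EReal) ≤ y := by
  rw [EReal.coe_inv, ← EReal.div_eq_inv_mul,
    EReal.le_div_iff_mul_le (by exact_mod_cast hr) (EReal.coe_ne_top r), EReal.coe_mul]

theorem Convex.interior_nonempty_of_interior_closure_nonempty {E : Type*}
    [NormedAddCommGroup E] [NormedSpace ℝ E] [FiniteDimensional ℝ E] {s : Set E}
    (hs : Convex ℝ s) (h : (interior (closure s)).Nonempty) : (interior s).Nonempty := by
  rw [hs.interior_nonempty_iff_affineSpan_eq_top, ← top_le_iff]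
  calc ⊤ = affineSpan ℝ (closure s) := (hs.closure.interior_nonempty_iff_affineSpan_eq_top.1 h).symm
    _ ≤ affineSpan ℝ s := affineSpan_le.2 <|
      closure_minimal (subset_affineSpan ℝ s) (affineSpan ℝ s).closed_of_finiteDimensional

theorem exists_interior_nonempty_of_subset_iUnion_convex {E : Type*} [NormedAddCommGroup E]
    [NormedSpace ℝ E] [FiniteDimensional ℝ E] {ι : Type*} [Countable ι] {s : ι → Set E}
    (hs : ∀ i, Convex ℝ (s i)) {U : Set E} (hU : (interior U).Nonempty) (hUs : U ⊆ ⋃ i, s i) :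
    ∃ i, (interior (s i)).Nonempty := by
  by_contra! H
  have hmeagre : IsMeagre (⋃ i, s i) := isMeagre_iUnion fun i ↦ IsNowhereDense.isMeagre <|
    not_nonempty_iff_eq_empty.1 fun h ↦
      ((hs i).interior_nonempty_of_interior_closure_nonempty h).ne_empty (H i)
  exact not_isMeagre_of_isOpen isOpen_interior hU (hmeagre.mono (interior_subset.trans hUs))

theorem exists_pos_eventually_mul_pow_le_of_liminf_pos {E : Type*} [NormedAddCommGroup E]
    [NormedSpace ℝ E] [Nontrivial E] {g : ℝ → EReal} {m : ℕ}
    (h : 0 < liminf (fun x : E ↦ ((‖x‖ ^ m)⁻¹ : ℝ) * g ‖x‖) (comap norm atTop)) :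
    ∃ c > (0 : ℝ), ∀ᶠ t in atTop, ((c * t ^ m : ℝ) : EReal) ≤ g t := by
  obtain ⟨c, hc0, hc⟩ := EReal.exists_between_coe_real h
  refine ⟨c, by exact_mod_cast hc0, ?_⟩
  filter_upwards [eventually_comap.1 (eventually_lt_of_lt_liminf hc), eventually_gt_atTop 0]
    with t ht ht0
  obtain ⟨x, rfl⟩ := exists_norm_eq E ht0.le
  rw [← EReal.coe_le_coe_inv_mul_iff (by positivity)]
  exact (ht x rfl).le

theorem liminf_pos_of_add_mul_pow_le {E : Type*} [SeminormedAddCommGroup E] {f : E → EReal}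
    {m : ℕ} (hm : m ≠ 0) {z : E} {a c : ℝ} (hc : 0 < c)
    (h : ∃ R, ∀ x, R ≤ ‖x - z‖ → ((a + c * ‖x - z‖ ^ m : ℝ) : EReal) ≤ f x) :
    0 < liminf (fun x : E ↦ ((‖x‖ ^ m)⁻¹ : ℝ) * f x) (comap norm atTop) := by
  obtain ⟨R, hR⟩ := h
  set ε := c / (2 * 2 ^ m)
  have hε : 0 < ε := by positivity
  have hlarge : ∀ᶠ t in atTop, 2 * ‖z‖ + 2 * |R| ≤ t ∧ -a ≤ ε * t ^ m ∧ 0 < t :=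
    (eventually_ge_atTop _).and <|
      (((tendsto_pow_atTop hm).const_mul_atTop hε).eventually_ge_atTop _).and
        (eventually_gt_atTop 0)
  refine lt_of_lt_of_le (EReal.coe_pos.2 hε) (le_liminf_of_le (by isBoundedDefault) ?_)
  filter_upwards [tendsto_comap.eventually hlarge] with x ⟨hxR, hxa, hx0⟩
  have hxz : ‖x‖ / 2 ≤ ‖x - z‖ := by linarith [norm_sub_norm_le x z, abs_nonneg R]
  have hhalf : c * (‖x‖ / 2) ^ m = 2 * (ε * ‖x‖ ^ m) := by
    simp only [ε, div_pow]; field_simp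
  have hbound : ε * ‖x‖ ^ m ≤ a + c * ‖x - z‖ ^ m :=
    calc ε * ‖x‖ ^ m ≤ a + c * (‖x‖ / 2) ^ m := by linarith
      _ ≤ a + c * ‖x - z‖ ^ m := by gcongr
  rw [EReal.coe_le_coe_inv_mul_iff (by positivity)]
  exact le_trans (by exact_mod_cast hbound) (hR x (by linarith [le_abs_self R, norm_nonneg z]))

theorem IsModulus.nonneg {φ : ℝ → EReal} (hφ : IsModulus φ) {t : ℝ} (ht : 0 ≤ t) : 0 ≤ φ t :=
  hφ.2.1 ▸ hφ.1 le_rfl ht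

section UnifQuasiconvexOn

variable {E : Type*} [NormedAddCommGroup E] [NormedSpace ℝ E] {f : E → EReal} {φ : ℝ → EReal}

theorem UnifQuasiconvexOn.add_mul_le_max {C : Set E} (hf : UnifQuasiconvexOn C φ f) {z v : E}
    {s t : ℝ} (hs : 0 ≤ s) (ht : 0 ≤ t) (hst : 0 < s + t) (hx : z + s • v ∈ C)
    (hy : z - t • v ∈ C) :
    f z + ((s * t / (s + t) ^ 2 : ℝ) : EReal) * φ ((s + t) * ‖v‖) ≤
      max (f (z + s • v)) (f (z - t • v)) := by
  have hl : t / (s + t) ∈ Icc (0 : ℝ) 1 :=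
    ⟨by positivity, (div_le_one hst).2 (by linarith)⟩
  convert hf hx hy hl using 4
  · match_scalars <;> field_simp <;> ring
  · field_simp; ring
  · rw [show z + s • v - (z - t • v) = (s + t) • v by module, norm_smul, Real.norm_of_nonneg hst.le]

theorem UnifQuasiconvexOn.convex_sublevel (hf : UnifQuasiconvexOn {x | f x ≠ ⊤} φ f)
    (hφ : IsModulus φ) (k : ℝ) : Convex ℝ {x | f x ≤ k} := by
  intro x hx y hy a b ha hb hab
  obtain rfl : b = 1 - a := by linarith
  have hdom : ∀ {w}, f w ≤ k → f w ≠ ⊤ := fun hw ↦ (hw.trans_lt (EReal.coe_lt_top k)).ne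
  refine le_trans (le_add_of_nonneg_right ?_) ((hf (hdom hx) (hdom hy) ⟨ha, by linarith⟩).trans
    (max_le hx hy))
  exact mul_nonneg (EReal.coe_nonneg.2 (mul_nonneg ha hb)) (hφ.nonneg (norm_nonneg _))

theorem UnifQuasiconvexOn.exists_closedBall_le [FiniteDimensional ℝ E]
    (hf : UnifQuasiconvexOn {x | f x ≠ ⊤} φ f) (hφ : IsModulus φ)
    (hint : (interior {x | f x ≠ ⊤}).Nonempty) :
    ∃ (z : E) (ρ k : ℝ), 0 < ρ ∧ ∀ y ∈ Metric.closedBall z ρ, f y ≤ k := by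
  have hcover : {x | f x ≠ ⊤} ⊆ ⋃ k : ℕ, {x | f x ≤ (k : ℝ)} := fun x hx ↦
    mem_iUnion.2 ⟨⌈(f x).toReal⌉₊, (EReal.le_coe_toReal hx).trans (by exact_mod_cast Nat.le_ceil _)⟩
  obtain ⟨k, z, hz⟩ := exists_interior_nonempty_of_subset_iUnion_convex
    (fun k : ℕ ↦ hf.convex_sublevel hφ k) hint hcover
  obtain ⟨ρ, hρ, hball⟩ := Metric.nhds_basis_closedBall.mem_iff.1 (mem_interior_iff_mem_nhds.1 hz)
  exact ⟨z, ρ, k, hρ, hball⟩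

theorem UnifQuasiconvexOn.exists_forall_le_of_closedBall_le
    (hf : UnifQuasiconvexOn {x | f x ≠ ⊤} φ f) {m : ℕ} (hm : 2 ≤ m) {c : ℝ} (hc : 0 < c)
    (hφ : ∀ᶠ t in atTop, ((c * t ^ m : ℝ) : EReal) ≤ φ t) {z : E} {ρ k a : ℝ} (hρ : 0 < ρ)
    (hk : ∀ y ∈ Metric.closedBall z ρ, f y ≤ k) (ha : f z = a) :
    ∃ R, ∀ x, R ≤ ‖x - z‖ → (a : EReal) ≤ f x := by
  obtain ⟨R, hR⟩ := eventually_atTop.1 (hφ.and (eventually_ge_atTop 1))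
  refine ⟨max R (|k - a| / (c * ρ) + 1), fun x hx ↦ ?_⟩
  rcases eq_or_ne (f x) ⊤ with hxt | hxt
  · simp [hxt]
  set d := ‖x - z‖
  have hdR : R ≤ d := le_of_max_le_left hx
  have hkd : |k - a| / (c * ρ) + 1 ≤ d := le_of_max_le_right hx
  have hd : 0 < d := lt_of_lt_of_le (by positivity) hkd
  have hdk : |k - a| < c * ρ * d := by rw [← div_lt_iff₀' (by positivity)]; linarith
  set v := d⁻¹ • (x - z)
  have hxv : z + d • v = x := by simp only [v, smul_inv_smul₀ hd.ne']; abel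
  have hv : ‖v‖ = 1 := by
    simp only [v, norm_smul, norm_inv, Real.norm_of_nonneg hd.le]; exact inv_mul_cancel₀ hd.ne'
  have hy : f (z - ρ • v) ≤ k := hk _ (by simp [norm_smul, hv, abs_of_pos hρ])
  have hseg := hf.add_mul_le_max hd.le hρ.le (by positivity) (hxv ▸ hxt)
    (hy.trans_lt (EReal.coe_lt_top k)).ne
  rw [hxv, hv, mul_one, ha] at hseg
  have hgain : c * ρ * d ≤ d * ρ / (d + ρ) ^ 2 * (c * (d + ρ) ^ m) := by
    obtain ⟨j, rfl⟩ := Nat.exists_eq_add_of_le' hm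
    have h1 : 1 ≤ (d + ρ) ^ j := one_le_pow₀ (by linarith [(hR R le_rfl).2])
    calc c * ρ * d ≤ c * ρ * d * (d + ρ) ^ j := le_mul_of_one_le_right (by positivity) h1
      _ = _ := by field_simp; ring
  have hmax : ((a + c * ρ * d : ℝ) : EReal) ≤ max (f x) (f (z - ρ • v)) := by
    refine le_trans ?_ hseg
    rw [EReal.coe_add]
    gcongr
    calc ((c * ρ * d : ℝ) : EReal) ≤ ((d * ρ / (d + ρ) ^ 2 * (c * (d + ρ) ^ m) : ℝ) : EReal) := by
          exact_mod_cast hgain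
      _ ≤ _ := by
          rw [EReal.coe_mul]
          exact mul_le_mul_of_nonneg_left (hR _ (by linarith)).1
            (EReal.coe_nonneg.2 (by positivity))
  rcases le_max_iff.1 hmax with hmax | hmax
  · have : a ≤ a + c * ρ * d := le_add_of_nonneg_right (by positivity)
    exact le_trans (by exact_mod_cast this) hmax
  · have : a + c * ρ * d ≤ k := by exact_mod_cast hmax.trans hy
    linarith [le_abs_self (k - a)]

theorem UnifQuasiconvexOn.exists_add_mul_pow_le (hf : UnifQuasiconvexOn {x | f x ≠ ⊤} φ f)
    {m : ℕ} {c : ℝ} (hc : 0 < c) (hφ : ∀ᶠ t in atTop, ((c * t ^ m : ℝ) : EReal) ≤ φ t)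
    {z : E} {a : ℝ} (ha : f z = a) (hfar : ∃ R, ∀ x, R ≤ ‖x - z‖ → (a : EReal) ≤ f x) :
    ∃ R, ∀ x, R ≤ ‖x - z‖ → ((a + c / 4 * ‖x - z‖ ^ m : ℝ) : EReal) ≤ f x := by
  obtain ⟨R₀, hR₀⟩ := eventually_atTop.1 (hφ.and (eventually_gt_atTop 0))
  obtain ⟨R₁, hR₁⟩ := hfar
  refine ⟨max R₀ (2 * R₁), fun x hx ↦ ?_⟩
  rcases eq_or_ne (f x) ⊤ with hxt | hxt
  · simp [hxt]
  set d := ‖x - z‖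
  obtain ⟨hφd, hd⟩ := hR₀ d (le_of_max_le_left hx)
  set v := (1 / 2 : ℝ) • (x - z)
  have hx' : z + v + (1 : ℝ) • v = x := by module
  have hz' : z + v - (1 : ℝ) • v = z := by module
  have hv : (1 + 1) * ‖v‖ = d := by
    simp only [v, norm_smul, Real.norm_of_nonneg (by norm_num : (0 : ℝ) ≤ 1 / 2)]; ring
  have hmid : (a : EReal) ≤ f (z + v) := hR₁ _ (by
    rw [add_sub_cancel_left]; linarith [le_of_max_le_right hx])
  have hseg := hf.add_mul_le_max zero_le_one zero_le_one (by norm_num) (hx' ▸ hxt)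
    (show f _ ≠ ⊤ by rw [hz', ha]; exact EReal.coe_ne_top a)
  rw [hx', hz', hv, ha] at hseg
  have hmax : ((a + c / 4 * d ^ m : ℝ) : EReal) ≤ max (f x) a := by
    refine le_trans ?_ hseg
    rw [EReal.coe_add, show c / 4 * d ^ m = 1 * 1 / (1 + 1) ^ 2 * (c * d ^ m) by ring,
      EReal.coe_mul]
    gcongr
  rcases le_max_iff.1 hmax with hmax | hmax
  · exact hmax
  · have : a + c / 4 * d ^ m ≤ a := by exact_mod_cast hmax
    nlinarith [pow_pos hd m]

end UnifQuasiconvexOn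

theorem statement_6_general (n : ℕ) (h : EuclideanSpace ℝ (Fin n) → EReal)
    (hbot : ∀ x, h x ≠ ⊥)
    (hint : (interior {x | h x ≠ ⊤}).Nonempty)
    (φ : ℝ → EReal) (hφ : IsModulus φ)
    (hquasi : UnifQuasiconvexOn {x | h x ≠ ⊤} φ h)
    (m : ℕ) (hm : 2 ≤ m)
    (hliminf : ∀ y : EuclideanSpace ℝ (Fin n),
      0 < Filter.liminf
        (fun x : EuclideanSpace ℝ (Fin n) => (((‖x‖ ^ m)⁻¹ : ℝ) : EReal) * φ ‖x - y‖)
        (Filter.comap (fun x : EuclideanSpace ℝ (Fin n) => ‖x‖) Filter.atTop)) :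
    0 < Filter.liminf
      (fun x : EuclideanSpace ℝ (Fin n) => (((‖x‖ ^ m)⁻¹ : ℝ) : EReal) * h x)
      (Filter.comap (fun x : EuclideanSpace ℝ (Fin n) => ‖x‖) Filter.atTop) := by
  rcases subsingleton_or_nontrivial (EuclideanSpace ℝ (Fin n))
  · rw [comap_norm_atTop, Bornology.cobounded_eq_bot, liminf_bot]
    exact EReal.zero_lt_top
  obtain ⟨c, hc, hgrowth⟩ :=
    exists_pos_eventually_mul_pow_le_of_liminf_pos (by simpa only [sub_zero] using hliminf 0)
  obtain ⟨z, ρ, k, hρ, hk⟩ := hquasi.exists_closedBall_le hφ hint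
  have hz : h z = (h z).toReal :=
    (EReal.coe_toReal ((hk z (Metric.mem_closedBall_self hρ.le)).trans_lt
      (EReal.coe_lt_top k)).ne (hbot z)).symm
  exact liminf_pos_of_add_mul_pow_le (by omega) (by positivity) <|
    hquasi.exists_add_mul_pow_le hc hgrowth hz <|
      hquasi.exists_forall_le_of_closedBall_le hm hc hgrowth hρ hk hz

/-- **m-supercoercivity.**  Let `h` be proper with convex domain having
nonempty interior, uniformly quasiconvex on `dom h` with modulus `φ`, and let `m ≥ 2`.
If for each `y`, `liminf_{‖x‖→∞} φ(‖x − y‖)/‖x‖^m > 0`, then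
`liminf_{‖x‖→∞} h(x)/‖x‖^m > 0`. -/
theorem statement_6 (n : ℕ) (h : EuclideanSpace ℝ (Fin n) → EReal)
    (hproper : ∃ x, h x ≠ ⊤) (hbot : ∀ x, h x ≠ ⊥)
    (hdomconv : Convex ℝ {x | h x ≠ ⊤})
    (hint : (interior {x | h x ≠ ⊤}).Nonempty)
    (φ : ℝ → EReal) (hφ : IsModulus φ)
    (hquasi : UnifQuasiconvexOn {x | h x ≠ ⊤} φ h)
    (m : ℕ) (hm : 2 ≤ m)
    (hliminf : ∀ y : EuclideanSpace ℝ (Fin n),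
      0 < Filter.liminf
        (fun x : EuclideanSpace ℝ (Fin n) => (((‖x‖ ^ m)⁻¹ : ℝ) : EReal) * φ ‖x - y‖)
        (Filter.comap (fun x : EuclideanSpace ℝ (Fin n) => ‖x‖) Filter.atTop)) :
    0 < Filter.liminf
      (fun x : EuclideanSpace ℝ (Fin n) => (((‖x‖ ^ m)⁻¹ : ℝ) : EReal) * h x)
      (Filter.comap (fun x : EuclideanSpace ℝ (Fin n) => ‖x‖) Filter.atTop) :=
  statement_6_general n h hbot hint φ hφ hquasi m hm hliminf
end
end

section
/- Let f : ℝ^n → ℝ ∪ {+∞} be a proper function that is uniformly quasiconvex with modulus φ on a closed convex set C ⊆ dom f. If x̄ ∈ C is a stationary point of f on C (in the lower Dini sense), then x̄ is the unique global minimizer of f on C (i.e., argmin_{x∈C} f(x) = {x̄}), and moreover f(x̄) + (1/4)·φ(‖y − x̄‖) ≤ f(y) for all y ∈ C. -/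
noncomputable section

open Set Filter

/-- The lower Dini directional derivative of `f` at `x` in direction `d`,
`liminf_{t↓0} (f(x + t d) − f(x))/t`. -/
def diniLower {E : Type*} [NormedAddCommGroup E] [NormedSpace ℝ E]
    (f : E → EReal) (x d : E) : EReal :=
  Filter.liminf (fun t : ℝ => ((t⁻¹ : ℝ) : EReal) * (f (x + t • d) - f x))
    (nhdsWithin 0 (Set.Ioi 0))

/-- `x̄ ∈ dom f ∩ C` is a stationary point of `f` on the convex set `C` in the lower Dini
sense: for every feasible direction `d` at `x̄`, `f^{D-}(x̄; d) ≥ 0`. -/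
def IsStationaryOn {E : Type*} [NormedAddCommGroup E] [NormedSpace ℝ E]
    (f : E → EReal) (C : Set E) (xb : E) : Prop :=
  xb ∈ C ∧ f xb ≠ ⊤ ∧
    ∀ d : E, (∃ δ > (0 : ℝ), ∀ l : ℝ, l ∈ Set.Ioo (0 : ℝ) δ → xb + l • d ∈ C) →
      (0 : EReal) ≤ diniLower f xb d

/-!
If `f y ≤ f x̄` for some `y ≠ x̄` in `C`, uniform quasiconvexity on the segment gives
`f (x̄ + t (y - x̄)) + t (1 - t) φ ‖y - x̄‖ ≤ f x̄`, so the lower Dini derivative of `f` at `x̄` in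
the feasible direction `y - x̄` is at most `-φ ‖y - x̄‖ < 0`, contradicting stationarity. Hence
`x̄` is the strict minimizer of `f` on `C`, and the quantitative bound follows from
quasiconvexity at the midpoint of `y` and `x̄`, where `f` is at least `f x̄`.
-/

open Topology

lemma EReal.inv_mul_sub_le_of_le_add {z : EReal} {b t r : ℝ} (ht : 0 < t)
    (hz : z ≤ ((b + t * r : ℝ) : EReal)) : ((t⁻¹ : ℝ) : EReal) * (z - b) ≤ r := by
  have hsub : z - b ≤ ((t * r : ℝ) : EReal) := by
    rw [EReal.sub_le_iff_le_add (by simp) (by simp), ← EReal.coe_add, add_comm]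
    exact hz
  calc ((t⁻¹ : ℝ) : EReal) * (z - b) ≤ ((t⁻¹ : ℝ) : EReal) * ((t * r : ℝ) : EReal) :=
        mul_le_mul_of_nonneg_left hsub (by exact_mod_cast (inv_pos.mpr ht).le)
    _ = r := by rw [← EReal.coe_mul, inv_mul_cancel_left₀ ht.ne']

section
variable {E : Type*} [NormedAddCommGroup E] [NormedSpace ℝ E]

lemma diniLower_le_of_eventually_le {f : E → EReal} {x d : E} {b r : ℝ} (hfx : f x = b)
    (h : ∀ᶠ t in 𝓝[>] (0 : ℝ), f (x + t • d) ≤ ((b + t * r : ℝ) : EReal)) :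
    diniLower f x d ≤ r := by
  have hq : ∀ᶠ t in 𝓝[>] (0 : ℝ), ((t⁻¹ : ℝ) : EReal) * (f (x + t • d) - f x) ≤ r := by
    filter_upwards [h, self_mem_nhdsWithin] with t ht htpos
    rw [hfx]
    exact EReal.inv_mul_sub_le_of_le_add htpos ht
  exact (liminf_le_liminf hq).trans (liminf_const _).le

lemma UnifQuasiconvexOn.diniLower_neg {C : Set E} {φ : ℝ → EReal} {f : E → EReal}
    (hq : UnifQuasiconvexOn C φ f) (hφ : ∀ t : ℝ, 0 < t → 0 < φ t)
    {x y : E} (hx : x ∈ C) (hy : y ∈ C) (hxy : y ≠ x) (hfx : f x ≠ ⊤) (hfx' : f x ≠ ⊥)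
    (hle : f y ≤ f x) : diniLower f x (y - x) < 0 := by
  -- `φ ‖y - x‖` may be `⊤`, so we work with a real number `c` below it.
  obtain ⟨c, hc0, hcφ⟩ := EReal.lt_iff_exists_real_btwn.mp
    (hφ _ (norm_pos_iff.mpr (sub_ne_zero.mpr hxy)))
  have hc : 0 < c := by exact_mod_cast hc0
  obtain ⟨b, hb⟩ : ∃ b : ℝ, f x = b := ⟨_, (EReal.coe_toReal hfx hfx').symm⟩
  suffices diniLower f x (y - x) ≤ ((-(c / 2) : ℝ) : EReal) from
    this.trans_lt (by exact_mod_cast neg_lt_zero.mpr (half_pos hc))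
  refine diniLower_le_of_eventually_le hb ?_
  filter_upwards [Ioo_mem_nhdsGT (by norm_num : (0 : ℝ) < 1 / 2)] with t ⟨ht0, ht⟩
  have hseg := hq hy hx (l := t) ⟨ht0.le, by linarith⟩
  rw [max_eq_right hle, hb, show t • y + (1 - t) • x = x + t • (y - x) by module] at hseg
  have hdrop : ((t * (c / 2) : ℝ) : EReal) ≤ ((t * (1 - t) : ℝ) : EReal) * φ ‖y - x‖ :=
    calc ((t * (c / 2) : ℝ) : EReal) ≤ ((t * (1 - t) : ℝ) : EReal) * c := by
          rw [← EReal.coe_mul, EReal.coe_le_coe_iff]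
          nlinarith [mul_nonneg (mul_pos ht0 hc).le (by linarith : 0 ≤ 1 / 2 - t)]
      _ ≤ _ := mul_le_mul_of_nonneg_left hcφ.le
          (by exact_mod_cast (by nlinarith : 0 ≤ t * (1 - t)))
  have := (add_le_add le_rfl hdrop).trans hseg
  rw [← EReal.le_sub_iff_add_le (by simp) (by simp), ← EReal.coe_sub] at this
  convert this using 3; ring

lemma IsStationaryOn.lt_of_ne {C : Set E} {φ : ℝ → EReal} {f : E → EReal} {xb : E}
    (hst : IsStationaryOn f C xb) (hq : UnifQuasiconvexOn C φ f) (hC : Convex ℝ C)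
    (hφ : ∀ t : ℝ, 0 < t → 0 < φ t) (hbot : f xb ≠ ⊥) {y : E} (hy : y ∈ C) (hne : y ≠ xb) :
    f xb < f y := by
  obtain ⟨hxb, htop, hdini⟩ := hst
  by_contra! hle
  have hfeas : ∃ δ > (0 : ℝ), ∀ l ∈ Ioo (0 : ℝ) δ, xb + l • (y - xb) ∈ C :=
    ⟨1, one_pos, fun l hl => hC.add_smul_sub_mem hxb hy ⟨hl.1.le, hl.2.le⟩⟩
  exact (hdini _ hfeas).not_gt (hq.diniLower_neg hφ hxb hy hne htop hbot hle)

lemma UnifQuasiconvexOn.add_quarter_le_of_forall_le {C : Set E} {φ : ℝ → EReal}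
    {f : E → EReal} (hq : UnifQuasiconvexOn C φ f) (hC : Convex ℝ C) {x y : E} (hx : x ∈ C)
    (hy : y ∈ C) (hmin : ∀ z ∈ C, f x ≤ f z) :
    f x + (((1 : ℝ) / 4 : ℝ) : EReal) * φ ‖y - x‖ ≤ f y := by
  have hmid := hq hy hx (l := 1 / 2) ⟨by norm_num, by norm_num⟩
  rw [max_eq_left (hmin y hy), show (1 / 2 * (1 - 1 / 2) : ℝ) = 1 / 4 by norm_num] at hmid
  have hmidC : (1 / 2 : ℝ) • y + (1 - 1 / 2 : ℝ) • x ∈ C :=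
    hC hy hx (by norm_num) (by norm_num) (by norm_num)
  exact (add_le_add (hmin _ hmidC) le_rfl).trans hmid

end

theorem statement_7_general (n : ℕ) (f : EuclideanSpace ℝ (Fin n) → EReal)
    (hbot : ∀ x, f x ≠ ⊥)
    (C : Set (EuclideanSpace ℝ (Fin n)))
    (hCconv : Convex ℝ C)
    (φ : ℝ → EReal) (hφ : IsModulus φ)
    (hquasi : UnifQuasiconvexOn C φ f)
    (xb : EuclideanSpace ℝ (Fin n)) (hstat : IsStationaryOn f C xb) :
    (∀ y ∈ C, f xb ≤ f y) ∧
    (∀ z ∈ C, (∀ y ∈ C, f z ≤ f y) → z = xb) ∧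
    (∀ y ∈ C, f xb + (((1 : ℝ) / 4 : ℝ) : EReal) * φ ‖y - xb‖ ≤ f y) := by
  have hstrict : ∀ y ∈ C, y ≠ xb → f xb < f y := fun y hy hne =>
    hstat.lt_of_ne hquasi hCconv hφ.2.2 (hbot xb) hy hne
  have hmin : ∀ y ∈ C, f xb ≤ f y := fun y hy => by
    rcases eq_or_ne y xb with rfl | hne
    · exact le_rfl
    · exact (hstrict y hy hne).le
  refine ⟨hmin, fun z hz hzmin => ?_, fun y hy =>
    hquasi.add_quarter_le_of_forall_le hCconv hstat.1 hy hmin⟩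
  by_contra hne
  exact (hstrict z hz hne).not_ge (hzmin xb hstat.1)

/-- **Stationarity and global optimality.**  If `f` is proper and uniformly
quasiconvex with modulus `φ` on the closed convex set `C ⊆ dom f` and `x̄` is a stationary
point of `f` on `C`, then `x̄` is the unique global minimizer of `f` on `C`, and
`f(x̄) + (1/4)·φ(‖y − x̄‖) ≤ f(y)` for all `y ∈ C`. -/
theorem statement_7 (n : ℕ) (f : EuclideanSpace ℝ (Fin n) → EReal)
    (hproper : ∃ x, f x ≠ ⊤) (hbot : ∀ x, f x ≠ ⊥)
    (C : Set (EuclideanSpace ℝ (Fin n)))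
    (hCclosed : IsClosed C) (hCconv : Convex ℝ C)
    (hdom : ∀ x ∈ C, f x ≠ ⊤)
    (φ : ℝ → EReal) (hφ : IsModulus φ)
    (hquasi : UnifQuasiconvexOn C φ f)
    (xb : EuclideanSpace ℝ (Fin n)) (hstat : IsStationaryOn f C xb) :
    (∀ y ∈ C, f xb ≤ f y) ∧
    (∀ z ∈ C, (∀ y ∈ C, f z ≤ f y) → z = xb) ∧
    (∀ y ∈ C, f xb + (((1 : ℝ) / 4 : ℝ) : EReal) * φ ‖y - xb‖ ≤ f y) :=
  statement_7_general n f hbot C hCconv φ hφ hquasi xb hstat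
end
end

section
/- Let f : ℝ^n → ℝ ∪ {+∞} be a proper, lower semicontinuous, coercive function that is uniformly quasiconvex with modulus φ on a closed convex set C ⊆ dom f. Then f attains its minimum on C at a unique point x̄ (i.e., argmin_{x∈C} f(x) = {x̄}), and f(x̄) + (1/4)·φ(‖y − x̄‖) ≤ f(y) holds for all y ∈ C. -/
/-!
Coercivity confines the sublevel set `{f ≤ f x₀}` to a ball, so lower semicontinuity yields a
minimizer `x̄` of `f` on the closed set `C`. Applying uniform quasiconvexity at the midpoint of
`y` and `x̄`, and using `f x̄ ≤ f ((y + x̄) / 2)`, gives `f x̄ + φ ‖y - x̄‖ / 4 ≤ max (f y) (f x̄) = f y`.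
For a second minimizer `y` this forces `φ ‖y - x̄‖ ≤ 0`, hence `y = x̄`.
-/

noncomputable section

open Set Filter

/-- `f(x) → +∞` as `‖x‖ → +∞`. -/
def Coercive {E : Type*} [NormedAddCommGroup E] (f : E → EReal) : Prop :=
  ∀ M : ℝ, ∃ R : ℝ, ∀ x : E, R ≤ ‖x‖ → (M : EReal) < f x

theorem LowerSemicontinuousOn.exists_isMinOn' {α β : Type*} [TopologicalSpace α] [LinearOrder β]
    {f : α → β} {s : Set α} (hf : LowerSemicontinuousOn f s) (hs : IsClosed s)
    {x₀ : α} (hx₀ : x₀ ∈ s) (hc : ∀ᶠ x in cocompact α ⊓ 𝓟 s, f x₀ ≤ f x) :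
    ∃ x ∈ s, IsMinOn f s x := by
  obtain ⟨K, hK, hKf⟩ := (hasBasis_cocompact.inf_principal _).eventually_iff.1 hc
  have hsub : insert x₀ (K ∩ s) ⊆ s := insert_subset_iff.2 ⟨hx₀, inter_subset_right⟩
  obtain ⟨x, hx, hxf⟩ := LowerSemicontinuousOn.exists_isMinOn (insert_nonempty _ _)
    ((hK.inter_right hs).insert x₀) (hf.mono hsub)
  refine ⟨x, hsub hx, fun y hy => ?_⟩
  by_cases hyK : y ∈ K
  exacts [hxf (Or.inr ⟨hyK, hy⟩), (hxf (Or.inl rfl)).trans (hKf ⟨hyK, hy⟩)]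

section Coercive

variable {E : Type*} [NormedAddCommGroup E] {f : E → EReal}

theorem Coercive.eventually_lt (hf : Coercive f) (M : ℝ) :
    ∀ᶠ x in Bornology.cobounded E, (M : EReal) < f x := by
  obtain ⟨R, hR⟩ := hf M
  exact (eventually_cobounded_le_norm R).mono hR

theorem Coercive.exists_isMinOn [ProperSpace E] (hf : Coercive f) {C : Set E}
    (hlsc : LowerSemicontinuousOn f C) (hC : IsClosed C) {x₀ : E} (hx₀ : x₀ ∈ C)
    (hfx₀ : f x₀ ≠ ⊤) : ∃ x ∈ C, IsMinOn f C x := by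
  obtain ⟨M, hM, -⟩ := EReal.lt_iff_exists_real_btwn.1 (lt_top_iff_ne_top.2 hfx₀)
  refine hlsc.exists_isMinOn' hC hx₀ (Filter.Eventually.filter_mono inf_le_left ?_)
  rw [← Metric.cobounded_eq_cocompact]
  exact (hf.eventually_lt M).mono fun x hx => (hM.trans hx).le

end Coercive

section UnifQuasiconvexOn

variable {E : Type*} [NormedAddCommGroup E] [NormedSpace ℝ E]
  {C : Set E} {φ : ℝ → EReal} {f : E → EReal} {x y : E}

theorem UnifQuasiconvexOn.add_quarter_mul_le_of_isMinOn (hf : UnifQuasiconvexOn C φ f)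
    (hC : Convex ℝ C) (hx : x ∈ C) (hmin : IsMinOn f C x) (hy : y ∈ C) :
    f x + ((1 / 4 : ℝ) : EReal) * φ ‖y - x‖ ≤ f y := by
  have hmid : ((1 : ℝ) / 2) • y + (1 - (1 : ℝ) / 2) • x ∈ C :=
    hC hy hx (by norm_num) (by norm_num) (by norm_num)
  have hquarter : ((1 : ℝ) / 2 * (1 - (1 : ℝ) / 2)) = 1 / 4 := by norm_num
  calc f x + ((1 / 4 : ℝ) : EReal) * φ ‖y - x‖
      ≤ f (((1 : ℝ) / 2) • y + (1 - (1 : ℝ) / 2) • x) + ((1 / 4 : ℝ) : EReal) * φ ‖y - x‖ := by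
        gcongr
        exact hmin hmid
    _ ≤ max (f y) (f x) := hquarter ▸ hf hy hx ⟨by norm_num, by norm_num⟩
    _ = f y := max_eq_left (hmin hy)

theorem UnifQuasiconvexOn.eq_of_isMinOn (hf : UnifQuasiconvexOn C φ f) (hC : Convex ℝ C)
    (hφ : IsModulus φ) (hx : x ∈ C) (hfx : f x ≠ ⊤) (hfx' : f x ≠ ⊥) (hmin : IsMinOn f C x)
    (hy : y ∈ C) (hfy : f y ≤ f x) : y = x := by
  by_contra hyx
  have hpos : (0 : EReal) < ((1 / 4 : ℝ) : EReal) * φ ‖y - x‖ :=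
    EReal.mul_pos (by norm_num) (hφ.2.2 _ (norm_pos_iff.2 (sub_ne_zero.2 hyx)))
  lift f x to ℝ using ⟨hfx, hfx'⟩ with a ha
  have hle := (hf.add_quarter_mul_le_of_isMinOn hC hx hmin hy).trans hfy
  rw [← ha] at hle
  simpa using (EReal.add_lt_add_left_coe hpos a).trans_le hle

end UnifQuasiconvexOn

theorem statement_8_general (n : ℕ) (f : EuclideanSpace ℝ (Fin n) → EReal)
    (hbot : ∀ x, f x ≠ ⊥)
    (hlsc : LowerSemicontinuous f) (hcoer : Coercive f)
    (C : Set (EuclideanSpace ℝ (Fin n))) (hCne : C.Nonempty)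
    (hCclosed : IsClosed C) (hCconv : Convex ℝ C)
    (hdom : ∀ x ∈ C, f x ≠ ⊤)
    (φ : ℝ → EReal) (hφ : IsModulus φ)
    (hquasi : UnifQuasiconvexOn C φ f) :
    ∃ xb ∈ C, (∀ y ∈ C, f xb ≤ f y) ∧
      (∀ z ∈ C, (∀ y ∈ C, f z ≤ f y) → z = xb) ∧
      (∀ y ∈ C, f xb + (((1 : ℝ) / 4 : ℝ) : EReal) * φ ‖y - xb‖ ≤ f y) := by
  obtain ⟨x₀, hx₀⟩ := hCne
  obtain ⟨xb, hxb, hmin⟩ :=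
    hcoer.exists_isMinOn (hlsc.lowerSemicontinuousOn C) hCclosed hx₀ (hdom x₀ hx₀)
  refine ⟨xb, hxb, fun y hy => hmin hy, fun z hz hzmin => ?_,
    fun y hy => hquasi.add_quarter_mul_le_of_isMinOn hCconv hxb hmin hy⟩
  exact hquasi.eq_of_isMinOn hCconv hφ hxb (hdom xb hxb) (hbot xb) hmin hz (hzmin xb hxb)

/-- A proper, lsc, coercive function that is uniformly quasiconvex with
modulus `φ` on a nonempty closed convex set `C ⊆ dom f` attains its minimum on `C` at a
unique point `x̄`, and `f(x̄) + (1/4)·φ(‖y − x̄‖) ≤ f(y)` for all `y ∈ C`. -/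
theorem statement_8 (n : ℕ) (f : EuclideanSpace ℝ (Fin n) → EReal)
    (hproper : ∃ x, f x ≠ ⊤) (hbot : ∀ x, f x ≠ ⊥)
    (hlsc : LowerSemicontinuous f) (hcoer : Coercive f)
    (C : Set (EuclideanSpace ℝ (Fin n))) (hCne : C.Nonempty)
    (hCclosed : IsClosed C) (hCconv : Convex ℝ C)
    (hdom : ∀ x ∈ C, f x ≠ ⊤)
    (φ : ℝ → EReal) (hφ : IsModulus φ)
    (hquasi : UnifQuasiconvexOn C φ f) :
    ∃ xb ∈ C, (∀ y ∈ C, f xb ≤ f y) ∧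
      (∀ z ∈ C, (∀ y ∈ C, f z ≤ f y) → z = xb) ∧
      (∀ y ∈ C, f xb + (((1 : ℝ) / 4 : ℝ) : EReal) * φ ‖y - xb‖ ≤ f y) :=
  statement_8_general n f hbot hlsc hcoer C hCne hCclosed hCconv hdom φ hφ hquasi
end
end

section
/- Let f : ℝ^n → ℝ ∪ {+∞} be proper, lower semicontinuous, coercive, and uniformly quasiconvex with modulus φ on a closed convex set C ⊆ dom f, and let γ > 0 and p > 1. Then for x̄ ∈ C the following are equivalent: (i) x̄ minimizes the high-order Moreau envelope e(x) = inf_{y∈C} ( f(y) + (1/(pγ))‖x − y‖^p ) over C; (ii) x̄ minimizes f over C; (iii) x̄ is a proximal fixed point, i.e., x̄ ∈ argmin_{y∈C} ( f(y) + (1/(pγ))‖x̄ − y‖^p ); (iv) x̄ is a stationary point of f on C in the lower Dini sense. -/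
noncomputable section

open Set Filter

/-- The high-order proximal set `prox_{f,γ}^p(C, x) = argmin_{y ∈ C} (f(y) + (1/(pγ))‖x − y‖^p)`. -/
def HOProx {E : Type*} [NormedAddCommGroup E]
    (f : E → EReal) (C : Set E) (p γ : ℝ) (x : E) : Set E :=
  {y | y ∈ C ∧ ∀ z ∈ C,
    f y + ((1 / (p * γ) * ‖x - y‖ ^ p : ℝ) : EReal)
      ≤ f z + ((1 / (p * γ) * ‖x - z‖ ^ p : ℝ) : EReal)}

/-- The high-order Moreau envelope `e(x) = inf_{y ∈ C} (f(y) + (1/(pγ))‖x − y‖^p)`. -/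
def HOMoreau {E : Type*} [NormedAddCommGroup E]
    (f : E → EReal) (C : Set E) (p γ : ℝ) (x : E) : EReal :=
  ⨅ y ∈ C, (f y + ((1 / (p * γ) * ‖x - y‖ ^ p : ℝ) : EReal))

/-!
All four conditions are equivalent to `x̄` minimizing `f` on `C`. Minimizers of `f` are
minimizers of the envelope, proximal fixed points and stationary points at once, since the
penalty `‖x - y‖ ^ p / (p γ)` is nonnegative and vanishes at `y = x`. Conversely, a minimizer
of the envelope minimizes `f` because `f` is lower semicontinuous and bounded below (by
coercivity), so the envelope cannot drop below `f x̄` near `x̄` nor far from it. For the last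
two conditions, if some `z ∈ C` had `f z < f x̄`, uniform quasiconvexity along the segment
`x̄ + l (z - x̄)` would make `f` decrease by at least a multiple of `l (1 - l)`: this beats the
penalty `O(l ^ p)` for small `l` because `p > 1`, and it makes the lower Dini derivative in
direction `z - x̄` negative.
-/

open Topology

section Envelope

variable {E : Type*} [NormedAddCommGroup E] {f : E → EReal} {C : Set E} {p γ : ℝ} {x y : E}

theorem LowerSemicontinuous.exists_coe_le_of_coercive [ProperSpace E]
    (hlsc : LowerSemicontinuous f) (hcoer : Coercive f) (hbot : ∀ x, f x ≠ ⊥) :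
    ∃ b : ℝ, ∀ x, (b : EReal) ≤ f x := by
  obtain ⟨R, hR⟩ := hcoer 0
  obtain ⟨x₀, -, hx₀⟩ := (hlsc.lowerSemicontinuousOn _).exists_isMinOn
    (Metric.nonempty_closedBall.2 (le_max_right R 0)) (isCompact_closedBall (0 : E) (max R 0))
  refine ⟨min 0 (f x₀).toReal, fun x => ?_⟩
  rcases le_or_gt R ‖x‖ with hx | hx
  · exact (EReal.coe_le_coe_iff.2 (min_le_left _ _)).trans (hR x hx).le
  · refine (EReal.coe_le_coe_iff.2 (min_le_right _ _)).trans
      ((EReal.coe_toReal_le (hbot x₀)).trans (hx₀ ?_))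
    exact mem_closedBall_zero_iff.2 (hx.le.trans (le_max_left _ _))

theorem HOMoreau_le (hy : y ∈ C) :
    HOMoreau f C p γ x ≤ f y + ((1 / (p * γ) * ‖x - y‖ ^ p : ℝ) : EReal) :=
  iInf₂_le y hy

theorem HOMoreau_le_self (hx : x ∈ C) (hp : p ≠ 0) : HOMoreau f C p γ x ≤ f x := by
  simpa [Real.zero_rpow hp] using HOMoreau_le (f := f) (p := p) (γ := γ) (x := x) hx

theorem le_add_HOMoreau_penalty (hp : 0 ≤ p) (hγ : 0 ≤ γ) (x y : E) :
    f y ≤ f y + ((1 / (p * γ) * ‖x - y‖ ^ p : ℝ) : EReal) :=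
  le_add_of_nonneg_right (EReal.coe_nonneg.2 (by positivity))

theorem le_HOMoreau {m : EReal} (hp : 0 ≤ p) (hγ : 0 ≤ γ) (hm : ∀ y ∈ C, m ≤ f y) :
    m ≤ HOMoreau f C p γ x :=
  le_iInf₂ fun y hy => (hm y hy).trans (le_add_HOMoreau_penalty hp hγ x y)

theorem IsMinOn.isMinOn_HOMoreau (hmin : IsMinOn f C x) (hx : x ∈ C) (hp : 0 < p)
    (hγ : 0 ≤ γ) : IsMinOn (HOMoreau f C p γ) C x :=
  isMinOn_iff.2 fun _ _ => (HOMoreau_le_self hx hp.ne').trans (le_HOMoreau hp.le hγ hmin)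

theorem IsMinOn.mem_HOProx (hmin : IsMinOn f C x) (hx : x ∈ C) (hp : 0 < p) (hγ : 0 ≤ γ) :
    x ∈ HOProx f C p γ x := by
  refine ⟨hx, fun z hz => ?_⟩
  simpa [Real.zero_rpow hp.ne'] using hmin hz |>.trans (le_add_HOMoreau_penalty hp.le hγ x z)

theorem le_HOMoreau_of_lowerSemicontinuousAt (hlsc : LowerSemicontinuousAt f x) (hp : 0 < p)
    (hγ : 0 < γ) (hle : ∀ y ∈ C, HOMoreau f C p γ x ≤ f y) (hbot : HOMoreau f C p γ x ≠ ⊥) :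
    f x ≤ HOMoreau f C p γ x := by
  by_contra! hlt
  obtain ⟨b, hb, hbf⟩ := EReal.lt_iff_exists_real_btwn.1 hlt
  obtain ⟨ε, hε, hball⟩ := Metric.eventually_nhds_iff.1 (hlsc b hbf)
  set c := 1 / (p * γ)
  have hc : 0 < c := by positivity
  lift HOMoreau f C p γ x to ℝ using ⟨hlt.ne_top, hbot⟩ with m hm
  -- near `x` the envelope is kept above `b` by `f`, away from `x` above `m` by the penalty
  have hlow : ((min b (m + c * ε ^ p) : ℝ) : EReal) ≤ m := hm ▸ le_iInf₂ fun y hy => by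
    rcases lt_or_ge (dist y x) ε with hyx | hyx
    · exact (EReal.coe_le_coe_iff.2 (min_le_left _ _)).trans
        ((hball hyx).le.trans (le_add_HOMoreau_penalty hp.le hγ.le x y))
    · have hpen : c * ε ^ p ≤ c * ‖x - y‖ ^ p := by
        gcongr
        rwa [norm_sub_rev, ← dist_eq_norm]
      calc ((min b (m + c * ε ^ p) : ℝ) : EReal) ≤ (m : EReal) + ((c * ε ^ p : ℝ) : EReal) :=
            EReal.coe_le_coe_iff.2 (min_le_right _ _)
        _ ≤ f y + ((c * ‖x - y‖ ^ p : ℝ) : EReal) :=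
            add_le_add (hm ▸ hle y hy) (EReal.coe_le_coe_iff.2 hpen)
  have hpos : 0 < c * ε ^ p := by positivity
  have hmb : m < b := by exact_mod_cast hb
  exact (lt_min hmb (lt_add_of_pos_right m hpos)).not_ge (EReal.coe_le_coe_iff.1 hlow)

theorem isMinOn_of_isMinOn_HOMoreau (hlsc : LowerSemicontinuousAt f x) (hp : 0 < p)
    (hγ : 0 < γ) (hbot : HOMoreau f C p γ x ≠ ⊥) (hmin : IsMinOn (HOMoreau f C p γ) C x) :
    IsMinOn f C x := by
  have hle : ∀ y ∈ C, HOMoreau f C p γ x ≤ f y := fun y hy =>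
    (hmin hy).trans (HOMoreau_le_self hy hp.ne')
  exact isMinOn_iff.2 fun z hz =>
    (le_HOMoreau_of_lowerSemicontinuousAt hlsc hp hγ hle hbot).trans (hle z hz)

end Envelope

theorem exists_mem_Ioo_mul_rpow_lt (A : ℝ) {κ p : ℝ} (hκ : 0 < κ) (hp : 1 < p) :
    ∃ l ∈ Ioo (0 : ℝ) 1, A * l ^ p < l * (1 - l) * κ := by
  have hlim : Tendsto (fun l : ℝ => A * l ^ (p - 1) - (1 - l) * κ) (𝓝[>] 0) (𝓝 (-κ)) := by
    have hcont : ContinuousAt (fun l : ℝ => A * l ^ (p - 1) - (1 - l) * κ) 0 :=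
      (continuousAt_const.mul (Real.continuousAt_rpow_const 0 _ (Or.inr (by linarith)))).sub
        ((continuousAt_const.sub continuousAt_id).mul continuousAt_const)
    simpa [Real.zero_rpow (by linarith : p - 1 ≠ 0)] using hcont.tendsto.mono_left nhdsWithin_le_nhds
  obtain ⟨l, hneg, hl⟩ :=
    ((hlim.eventually (gt_mem_nhds (neg_neg_of_pos hκ))).and (Ioo_mem_nhdsGT one_pos)).exists
  refine ⟨l, hl, ?_⟩
  have hpow : A * l ^ p = l * (A * l ^ (p - 1)) := by
    rw [Real.rpow_sub_one hl.1.ne']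
    field_simp
    rw [mul_div_cancel_right₀ _ hl.1.ne']
  rw [hpow, mul_assoc]
  exact mul_lt_mul_of_pos_left (by linarith) hl.1

theorem IsModulus.exists_coe_le {φ : ℝ → EReal} (hφ : IsModulus φ) {t : ℝ} (ht : 0 < t) :
    ∃ κ : ℝ, 0 < κ ∧ (κ : EReal) ≤ φ t := by
  obtain ⟨κ, hκ, hκφ⟩ := EReal.lt_iff_exists_real_btwn.1 (hφ.2.2 t ht)
  exact ⟨κ, by exact_mod_cast hκ, hκφ.le⟩

section Quasiconvex

variable {E : Type*} [NormedAddCommGroup E] [NormedSpace ℝ E] {f : E → EReal} {C : Set E}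
  {φ : ℝ → EReal} {x z : E}

theorem UnifQuasiconvexOn.exists_add_le (hq : UnifQuasiconvexOn C φ f) (hφ : IsModulus φ)
    (hx : x ∈ C) (hz : z ∈ C) (hzx : f z < f x) :
    ∃ κ : ℝ, 0 < κ ∧
      ∀ l ∈ Icc (0 : ℝ) 1, f (x + l • (z - x)) + ((l * (1 - l) * κ : ℝ) : EReal) ≤ f x := by
  have hne : z ≠ x := by
    rintro rfl
    exact lt_irrefl _ hzx
  obtain ⟨κ, hκ, hκφ⟩ := hφ.exists_coe_le (norm_pos_iff.2 (sub_ne_zero.2 hne))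
  refine ⟨κ, hκ, fun l hl => ?_⟩
  have hmix : l • z + (1 - l) • x = x + l • (z - x) := by module
  have hcoef : (0 : EReal) ≤ ((l * (1 - l) : ℝ) : EReal) :=
    EReal.coe_nonneg.2 (mul_nonneg hl.1 (sub_nonneg.2 hl.2))
  calc f (x + l • (z - x)) + ((l * (1 - l) * κ : ℝ) : EReal)
      ≤ f (l • z + (1 - l) • x) + ((l * (1 - l) : ℝ) : EReal) * φ ‖z - x‖ := by
        rw [hmix, EReal.coe_mul]
        exact add_le_add le_rfl (mul_le_mul_of_nonneg_left hκφ hcoef)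
    _ ≤ max (f z) (f x) := hq hz hx hl
    _ = f x := max_eq_right hzx.le

theorem UnifQuasiconvexOn.isMinOn_of_mem_HOProx (hq : UnifQuasiconvexOn C φ f)
    (hφ : IsModulus φ) (hC : Convex ℝ C) (hdom : ∀ y ∈ C, f y ≠ ⊤) (hbot : ∀ y ∈ C, f y ≠ ⊥)
    {p γ : ℝ} (hp : 1 < p) (hx : x ∈ HOProx f C p γ x) : IsMinOn f C x := by
  refine isMinOn_iff.2 fun z hz => ?_
  by_contra! hzx
  obtain ⟨κ, hκ, hdesc⟩ := hq.exists_add_le hφ hx.1 hz hzx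
  obtain ⟨l, hl, hlt⟩ := exists_mem_Ioo_mul_rpow_lt (1 / (p * γ) * ‖z - x‖ ^ p) hκ hp
  have hw : x + l • (z - x) ∈ C := hC.add_smul_sub_mem hx.1 hz (Ioo_subset_Icc_self hl)
  have hdist : ‖x - (x + l • (z - x))‖ = l * ‖z - x‖ := by
    rw [sub_add_cancel_left, norm_neg, norm_smul, Real.norm_of_nonneg hl.1.le]
  have hprox := hx.2 _ hw
  rw [sub_self, norm_zero, Real.zero_rpow (by linarith), mul_zero, EReal.coe_zero, add_zero,
    hdist, Real.mul_rpow hl.1.le (norm_nonneg _)] at hprox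
  have hdec := hdesc l (Ioo_subset_Icc_self hl)
  lift f x to ℝ using ⟨hdom x hx.1, hbot x hx.1⟩ with a
  lift f (x + l • (z - x)) to ℝ using ⟨hdom _ hw, hbot _ hw⟩ with b
  norm_cast at hprox hdec
  linarith

theorem UnifQuasiconvexOn.isMinOn_of_isStationaryOn (hq : UnifQuasiconvexOn C φ f)
    (hφ : IsModulus φ) (hC : Convex ℝ C) (hdom : ∀ y ∈ C, f y ≠ ⊤) (hbot : ∀ y ∈ C, f y ≠ ⊥)
    (hx : IsStationaryOn f C x) : IsMinOn f C x := by
  refine isMinOn_iff.2 fun z hz => ?_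
  by_contra! hzx
  obtain ⟨κ, hκ, hdesc⟩ := hq.exists_add_le hφ hx.1 hz hzx
  have hquot : ∀ᶠ l in 𝓝[>] 0,
      ((l⁻¹ : ℝ) : EReal) * (f (x + l • (z - x)) - f x) ≤ ((-(κ / 2) : ℝ) : EReal) := by
    filter_upwards [Ioo_mem_nhdsGT (by norm_num : (0 : ℝ) < 1 / 2)] with l hl
    have hl1 : l ∈ Icc (0 : ℝ) 1 := ⟨hl.1.le, by linarith [hl.2]⟩
    have hw : x + l • (z - x) ∈ C := hC.add_smul_sub_mem hx.1 hz hl1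
    have hdec := hdesc l hl1
    lift f x to ℝ using ⟨hdom x hx.1, hbot x hx.1⟩ with a
    lift f (x + l • (z - x)) to ℝ using ⟨hdom _ hw, hbot _ hw⟩ with b
    norm_cast at hdec ⊢
    rw [inv_mul_le_iff₀ hl.1]
    nlinarith [mul_nonneg (mul_nonneg hl.1.le hκ.le) (by linarith [hl.2] : (0 : ℝ) ≤ 1 / 2 - l)]
  have hdir : ∃ δ > 0, ∀ l ∈ Ioo (0 : ℝ) δ, x + l • (z - x) ∈ C :=
    ⟨1, one_pos, fun l hl => hC.add_smul_sub_mem hx.1 hz (Ioo_subset_Icc_self hl)⟩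
  have hneg : (0 : EReal) ≤ ((-(κ / 2) : ℝ) : EReal) :=
    (hx.2.2 _ hdir).trans (liminf_le_of_frequently_le hquot.frequently)
  have := EReal.coe_nonneg.1 hneg
  linarith

theorem IsMinOn.isStationaryOn (hmin : IsMinOn f C x) (hx : x ∈ C) (htop : f x ≠ ⊤)
    (hbot : f x ≠ ⊥) : IsStationaryOn f C x := by
  refine ⟨hx, htop, fun d ⟨δ, hδ, hdir⟩ => le_liminf_of_le (by isBoundedDefault) ?_⟩
  filter_upwards [Ioo_mem_nhdsGT hδ] with t ht
  exact mul_nonneg (EReal.coe_nonneg.2 (inv_nonneg.2 ht.1.le))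
    ((EReal.sub_nonneg (Or.inr htop) (Or.inr hbot)).2 (hmin (hdir t ht)))

end Quasiconvex

theorem statement_11_general (n : ℕ) (f : EuclideanSpace ℝ (Fin n) → EReal)
    (hbot : ∀ x, f x ≠ ⊥)
    (hlsc : LowerSemicontinuous f) (hcoer : Coercive f)
    (C : Set (EuclideanSpace ℝ (Fin n)))
    (hCconv : Convex ℝ C)
    (hdom : ∀ x ∈ C, f x ≠ ⊤)
    (φ : ℝ → EReal) (hφ : IsModulus φ)
    (hquasi : UnifQuasiconvexOn C φ f)
    (γ p : ℝ) (hγ : 0 < γ) (hp : 1 < p)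
    (xb : EuclideanSpace ℝ (Fin n)) (hxb : xb ∈ C) :
    ((∀ z ∈ C, HOMoreau f C p γ xb ≤ HOMoreau f C p γ z) ↔ (∀ z ∈ C, f xb ≤ f z)) ∧
    ((∀ z ∈ C, f xb ≤ f z) ↔ xb ∈ HOProx f C p γ xb) ∧
    (xb ∈ HOProx f C p γ xb ↔ IsStationaryOn f C xb) := by
  have hp₀ : 0 < p := by linarith
  have hbotC : ∀ y ∈ C, f y ≠ ⊥ := fun y _ => hbot y
  obtain ⟨b, hb⟩ := hlsc.exists_coe_le_of_coercive hcoer hbot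
  have henv : HOMoreau f C p γ xb ≠ ⊥ :=
    ne_bot_of_le_ne_bot (EReal.coe_ne_bot b) (le_HOMoreau hp₀.le hγ.le fun y _ => hb y)
  have hprox_min : xb ∈ HOProx f C p γ xb → IsMinOn f C xb :=
    hquasi.isMinOn_of_mem_HOProx hφ hCconv hdom hbotC hp
  refine ⟨⟨isMinOn_of_isMinOn_HOMoreau (hlsc xb) hp₀ hγ henv,
      fun h => IsMinOn.isMinOn_HOMoreau h hxb hp₀ hγ.le⟩,
    ⟨fun h => IsMinOn.mem_HOProx h hxb hp₀ hγ.le, hprox_min⟩,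
    fun h => (hprox_min h).isStationaryOn hxb (hdom xb hxb) (hbot xb),
    fun h => (hquasi.isMinOn_of_isStationaryOn hφ hCconv hdom hbotC h).mem_HOProx hxb hp₀ hγ.le⟩

/-- For `f` proper, lsc, coercive and uniformly quasiconvex with
modulus `φ` on a closed convex set `C ⊆ dom f`, `γ > 0`, `p > 1` and `x̄ ∈ C`, the
following are equivalent: (i) `x̄` minimizes the Moreau envelope over `C`; (ii) `x̄`
minimizes `f` over `C`; (iii) `x̄` is a proximal fixed point; (iv) `x̄` is a lower-Dini
stationary point of `f` on `C`. -/
theorem statement_11 (n : ℕ) (f : EuclideanSpace ℝ (Fin n) → EReal)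
    (hproper : ∃ x, f x ≠ ⊤) (hbot : ∀ x, f x ≠ ⊥)
    (hlsc : LowerSemicontinuous f) (hcoer : Coercive f)
    (C : Set (EuclideanSpace ℝ (Fin n)))
    (hCclosed : IsClosed C) (hCconv : Convex ℝ C)
    (hdom : ∀ x ∈ C, f x ≠ ⊤)
    (φ : ℝ → EReal) (hφ : IsModulus φ)
    (hquasi : UnifQuasiconvexOn C φ f)
    (γ p : ℝ) (hγ : 0 < γ) (hp : 1 < p)
    (xb : EuclideanSpace ℝ (Fin n)) (hxb : xb ∈ C) :
    ((∀ z ∈ C, HOMoreau f C p γ xb ≤ HOMoreau f C p γ z) ↔ (∀ z ∈ C, f xb ≤ f z)) ∧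
    ((∀ z ∈ C, f xb ≤ f z) ↔ xb ∈ HOProx f C p γ xb) ∧
    (xb ∈ HOProx f C p γ xb ↔ IsStationaryOn f C xb) :=
  statement_11_general n f hbot hlsc hcoer C hCconv hdom φ hφ hquasi γ p hγ hp xb hxb
end
end

section
/- Let f : ℝ^n → ℝ ∪ {+∞} be proper, lower semicontinuous, coercive, and uniformly quasiconvex with modulus φ on a closed convex set C ⊆ dom f, and let {x^k}_{k≥0} be a HiPPA sequence for f on C with order p > 1 and parameters γ_k ∈ (γ_min, γ_max). Then the sequence (f(x^k))_{k≥0} is decreasing, and ∑_{k=0}^{∞} ‖x^{k+1} − x^k‖^p ≤ p·γ_max·( f(x^0) − inf_{x∈C} f(x) ) < ∞. -/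
noncomputable section

open Set Filter

/-- A lower semicontinuous `EReal`-valued function which never takes the value `⊥`
is bounded below by a real constant on any compact set. -/
lemma lsc_bddBelow_on_compact {X : Type*} [TopologicalSpace X] {f : X → EReal}
    (hlsc : LowerSemicontinuous f) (hbot : ∀ x, f x ≠ ⊥) {K : Set X} (hK : IsCompact K) :
    ∃ m : ℝ, ∀ z ∈ K, (m : EReal) ≤ f z := by
  have hc : ∀ x : X, ∃ c : ℝ, (c : EReal) < f x := by
    intro x
    obtain ⟨z, hz1, hz2⟩ := exists_between (Ne.bot_lt (hbot x))
    refine ⟨z.toReal, ?_⟩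
    have hzt : z ≠ ⊤ := (hz2.trans_le le_top).ne
    rw [EReal.coe_toReal hzt hz1.ne']
    exact hz2
  choose c hc using hc
  obtain ⟨t, -, ht⟩ := hK.elim_nhds_subcover (fun x => {y | (c x : EReal) < f y})
    (fun x _ => hlsc x _ (hc x))
  rcases t.eq_empty_or_nonempty with rfl | hne
  · exact ⟨0, fun z hz => absurd (ht hz) (by simp)⟩
  · refine ⟨(t.image c).min' (hne.image c), fun z hz => ?_⟩
    obtain ⟨x, hx, hzx⟩ : ∃ x ∈ t, (c x : EReal) < f z := by
      simpa using ht hz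
    calc ((t.image c).min' (hne.image c) : EReal) ≤ (c x : EReal) := by
          exact_mod_cast (t.image c).min'_le (c x) (Finset.mem_image_of_mem c hx)
      _ ≤ f z := hzx.le

/-- Along a HiPPA sequence, the values `f(x^k)` are decreasing and
`∑ₖ ‖x^{k+1} − x^k‖^p ≤ p·γ_max·(f(x⁰) − inf_C f) < ∞`. -/
theorem statement_12 (n : ℕ) (f : EuclideanSpace ℝ (Fin n) → EReal)
    (hproper : ∃ x, f x ≠ ⊤) (hbot : ∀ x, f x ≠ ⊥)
    (hlsc : LowerSemicontinuous f) (hcoer : Coercive f)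
    (C : Set (EuclideanSpace ℝ (Fin n)))
    (hCclosed : IsClosed C) (hCconv : Convex ℝ C)
    (hdom : ∀ x ∈ C, f x ≠ ⊤)
    (φ : ℝ → EReal) (hφ : IsModulus φ)
    (hquasi : UnifQuasiconvexOn C φ f)
    (p γmin γmax : ℝ) (hp : 1 < p) (hγmin : 0 < γmin) (hγ : γmin < γmax)
    (x : ℕ → EuclideanSpace ℝ (Fin n)) (γ : ℕ → ℝ)
    (hx0 : x 0 ∈ C)
    (hγk : ∀ k, γ k ∈ Set.Ioo γmin γmax)
    (hstep : ∀ k, x (k + 1) ∈ HOProx f C p (γ k) (x k)) :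
    (Antitone fun k => f (x k)) ∧
    Summable (fun k => ‖x (k + 1) - x k‖ ^ p) ∧
    ((∑' k, ‖x (k + 1) - x k‖ ^ p : ℝ) : EReal)
      ≤ ((p * γmax : ℝ) : EReal) * (f (x 0) - ⨅ z ∈ C, f z) := by
  have hp0 : (0 : ℝ) < p := lt_trans one_pos hp
  have hγmax : 0 < γmax := hγmin.trans hγ
  have hpγmax : 0 < p * γmax := mul_pos hp0 hγmax
  -- membership of the iterates in C
  have hmem : ∀ k, x k ∈ C := by
    intro k
    cases k with
    | zero => exact hx0
    | succ k => exact (hstep k).1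
  -- the values are finite reals
  have hfin : ∀ k, f (x k) ≠ ⊤ := fun k => hdom _ (hmem k)
  set F : ℕ → ℝ := fun k => (f (x k)).toReal with hF
  have hFcoe : ∀ k, ((F k : ℝ) : EReal) = f (x k) := fun k =>
    EReal.coe_toReal (hfin k) (hbot _)
  -- the key step inequality, in real form
  have hkey : ∀ k, F (k + 1) + 1 / (p * γ k) * ‖x k - x (k + 1)‖ ^ p ≤ F k := by
    intro k
    have h := (hstep k).2 (x k) (hmem k)
    have hz : (1 / (p * γ k) * ‖x k - x k‖ ^ p : ℝ) = 0 := by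
      rw [sub_self, norm_zero, Real.zero_rpow hp0.ne', mul_zero]
    rw [hz, EReal.coe_zero, add_zero, ← hFcoe k, ← hFcoe (k + 1), ← EReal.coe_add] at h
    exact_mod_cast h
  have hγkpos : ∀ k, 0 < p * γ k := fun k => mul_pos hp0 (hγmin.trans (hγk k).1)
  have hnn : ∀ k, 0 ≤ ‖x (k + 1) - x k‖ ^ p := fun k => Real.rpow_nonneg (norm_nonneg _) _
  -- decrease of F
  have hdec : ∀ k, F (k + 1) ≤ F k := by
    intro k
    have := hkey k
    have h2 : 0 ≤ 1 / (p * γ k) * ‖x k - x (k + 1)‖ ^ p :=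
      mul_nonneg (one_div_nonneg.2 (hγkpos k).le) (Real.rpow_nonneg (norm_nonneg _) _)
    linarith
  -- step bound
  have hstepb : ∀ k, ‖x (k + 1) - x k‖ ^ p ≤ p * γmax * (F k - F (k + 1)) := by
    intro k
    have h := hkey k
    rw [norm_sub_rev]
    have h1 : ‖x k - x (k + 1)‖ ^ p ≤ p * γ k * (F k - F (k + 1)) := by
      have hpos := hγkpos k
      rw [div_mul_eq_mul_div, one_mul, ← le_sub_iff_add_le', div_le_iff₀ hpos] at h
      linarith
    refine h1.trans ?_
    have hd : 0 ≤ F k - F (k + 1) := sub_nonneg.2 (hdec k)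
    have : p * γ k ≤ p * γmax := by
      have := (hγk k).2
      nlinarith
    nlinarith
  -- antitone of f ∘ x
  have hanti : Antitone fun k => f (x k) := by
    apply antitone_nat_of_succ_le
    intro k
    rw [← hFcoe k, ← hFcoe (k + 1)]
    exact_mod_cast hdec k
  -- global lower bound for f
  obtain ⟨R, hR⟩ := hcoer 0
  obtain ⟨m₀, hm₀⟩ := lsc_bddBelow_on_compact hlsc hbot
    (isCompact_closedBall (0 : EuclideanSpace ℝ (Fin n)) (max R 0))
  set m : ℝ := min m₀ 0 with hm
  have hlb : ∀ z, (m : EReal) ≤ f z := by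
    intro z
    rcases le_or_gt ‖z‖ (max R 0) with hzR | hzR
    · exact le_trans (by exact_mod_cast min_le_left m₀ 0)
        (hm₀ z (by simpa [Metric.mem_closedBall, dist_eq_norm] using hzR))
    · refine le_trans (by exact_mod_cast min_le_right m₀ 0)
        (hR z (le_of_lt (lt_of_le_of_lt (le_max_left R 0) hzR))).le
  have hFm : ∀ k, m ≤ F k := by
    intro k
    have := hlb (x k)
    rw [← hFcoe k] at this
    exact_mod_cast this
  -- partial sum bound (with an arbitrary real lower bound b on F)
  have hpsum : ∀ b : ℝ, (∀ k, b ≤ F k) →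
      ∀ N, ∑ k ∈ Finset.range N, ‖x (k + 1) - x k‖ ^ p ≤ p * γmax * (F 0 - b) := by
    intro b hb N
    calc ∑ k ∈ Finset.range N, ‖x (k + 1) - x k‖ ^ p
        ≤ ∑ k ∈ Finset.range N, p * γmax * (F k - F (k + 1)) :=
          Finset.sum_le_sum fun k _ => hstepb k
      _ = p * γmax * ∑ k ∈ Finset.range N, (F k - F (k + 1)) := by
          rw [Finset.mul_sum]
      _ = p * γmax * (F 0 - F N) := by
          rw [Finset.sum_range_sub' F N]
      _ ≤ p * γmax * (F 0 - b) := by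
          have := hb N
          nlinarith
  have hsummable : Summable fun k => ‖x (k + 1) - x k‖ ^ p :=
    summable_of_sum_range_le hnn (hpsum m hFm)
  refine ⟨hanti, hsummable, ?_⟩
  -- the infimum
  set I : EReal := ⨅ z ∈ C, f z with hI
  have hIle : ∀ k, I ≤ f (x k) := fun k => iInf₂_le (x k) (hmem k)
  have hImb : (m : EReal) ≤ I := le_iInf₂ fun z _ => hlb z
  have hItop : I ≠ ⊤ := fun h => (hfin 0) (top_le_iff.1 (h ▸ hIle 0))
  have hIbot : I ≠ ⊥ := fun h => by
    rw [h] at hImb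
    exact (EReal.coe_ne_bot m) (le_bot_iff.1 hImb)
  have hIcoe : ((I.toReal : ℝ) : EReal) = I := EReal.coe_toReal hItop hIbot
  have hFI : ∀ k, I.toReal ≤ F k := by
    intro k
    have := hIle k
    rw [← hIcoe, ← hFcoe k] at this
    exact_mod_cast this
  have htsum : (∑' k, ‖x (k + 1) - x k‖ ^ p : ℝ) ≤ p * γmax * (F 0 - I.toReal) :=
    Real.tsum_le_of_sum_range_le hnn (hpsum I.toReal hFI)
  calc ((∑' k, ‖x (k + 1) - x k‖ ^ p : ℝ) : EReal)
      ≤ ((p * γmax * (F 0 - I.toReal) : ℝ) : EReal) := by exact_mod_cast htsum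
    _ = ((p * γmax : ℝ) : EReal) * (f (x 0) - I) := by
        rw [EReal.coe_mul, EReal.coe_sub, hFcoe 0, hIcoe]
end
end

section
/- Let f : ℝ^n → ℝ ∪ {+∞} be proper, lower semicontinuous, coercive, and uniformly quasiconvex with modulus φ on a closed convex set C ⊆ dom f, and let {x^k}_{k≥0} be a HiPPA sequence for f on C with order p > 1 and parameters γ_k ∈ (γ_min, γ_max). Then for every integer N ≥ 1, min_{0 ≤ k ≤ N−1} ‖x^{k+1} − x^k‖^p ≤ p·γ_max·( f(x^0) − inf_{x∈C} f(x) ) / N. -/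
noncomputable section

open Set Filter

/-- Along a HiPPA sequence, for every `N ≥ 1` the smallest of the
first `N` step sizes satisfies
`min_{0 ≤ k ≤ N−1} ‖x^{k+1} − x^k‖^p ≤ p·γ_max·(f(x⁰) − inf_C f)/N`. -/
theorem statement_14 (n : ℕ) (f : EuclideanSpace ℝ (Fin n) → EReal)
    (hproper : ∃ x, f x ≠ ⊤) (hbot : ∀ x, f x ≠ ⊥)
    (hlsc : LowerSemicontinuous f) (hcoer : Coercive f)
    (C : Set (EuclideanSpace ℝ (Fin n)))
    (hCclosed : IsClosed C) (hCconv : Convex ℝ C)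
    (hdom : ∀ x ∈ C, f x ≠ ⊤)
    (φ : ℝ → EReal) (hφ : IsModulus φ)
    (hquasi : UnifQuasiconvexOn C φ f)
    (p γmin γmax : ℝ) (hp : 1 < p) (hγmin : 0 < γmin) (hγ : γmin < γmax)
    (x : ℕ → EuclideanSpace ℝ (Fin n)) (γ : ℕ → ℝ)
    (hx0 : x 0 ∈ C)
    (hγk : ∀ k, γ k ∈ Set.Ioo γmin γmax)
    (hstep : ∀ k, x (k + 1) ∈ HOProx f C p (γ k) (x k)) :
    ∀ N : ℕ, 1 ≤ N → ∃ k < N,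
      (((N : ℝ) * ‖x (k + 1) - x k‖ ^ p : ℝ) : EReal)
        ≤ ((p * γmax : ℝ) : EReal) * (f (x 0) - ⨅ z ∈ C, f z) := by
  intro N hN
  -- all iterates stay in C
  have hmem : ∀ k, x k ∈ C := by
    intro k
    induction k with
    | zero => exact hx0
    | succ k ih => exact (hstep k).1
  set F : ℕ → ℝ := fun k => (f (x k)).toReal with hF
  have hfin : ∀ k, f (x k) = ((F k : ℝ) : EReal) :=
    fun k => (EReal.coe_toReal (hdom _ (hmem k)) (hbot _)).symm
  have hppos : (0:ℝ) < p := by linarith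
  have hγmaxpos : (0:ℝ) < γmax := by linarith
  have key : ∀ k, ‖x (k+1) - x k‖ ^ p ≤ p * γmax * (F k - F (k+1)) := by
    intro k
    obtain ⟨hγk1, hγk2⟩ := hγk k
    have hpγ : 0 < p * γ k := mul_pos hppos (by linarith)
    have h1 := (hstep k).2 (x k) (hmem k)
    rw [sub_self, norm_zero, Real.zero_rpow hppos.ne', mul_zero, EReal.coe_zero,
      add_zero, hfin (k+1), hfin k, ← EReal.coe_add, EReal.coe_le_coe_iff] at h1
    have h1' : 1 / (p * γ k) * ‖x (k+1) - x k‖ ^ p ≤ F k - F (k+1) := by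
      rw [norm_sub_rev]; linarith
    have hs : (0:ℝ) ≤ ‖x (k+1) - x k‖ ^ p := Real.rpow_nonneg (norm_nonneg _) p
    have h2 : ‖x (k+1) - x k‖ ^ p ≤ p * γ k * (F k - F (k+1)) := by
      have := mul_le_mul_of_nonneg_left h1' hpγ.le
      rw [← mul_assoc, mul_one_div, div_self hpγ.ne', one_mul] at this
      exact this
    have h3 : (0:ℝ) ≤ F k - F (k+1) := nonneg_of_mul_nonneg_right (hs.trans h2) hpγ
    nlinarith [mul_nonneg (mul_nonneg hppos.le (by linarith : (0:ℝ) ≤ γmax - γ k)) h3]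
  have hsum : ∑ k ∈ Finset.range N, ‖x (k+1) - x k‖ ^ p ≤ p * γmax * (F 0 - F N) := by
    calc ∑ k ∈ Finset.range N, ‖x (k+1) - x k‖ ^ p
        ≤ ∑ k ∈ Finset.range N, p * γmax * (F k - F (k+1)) :=
          Finset.sum_le_sum fun k _ => key k
      _ = p * γmax * (F 0 - F N) := by
          rw [← Finset.mul_sum, Finset.sum_range_sub' F N]
  obtain ⟨k, hkN, hkmin⟩ := Finset.exists_min_image (Finset.range N)
    (fun k => ‖x (k+1) - x k‖ ^ p) ⟨0, Finset.mem_range.mpr hN⟩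
  refine ⟨k, Finset.mem_range.mp hkN, ?_⟩
  have hNmin : (N:ℝ) * ‖x (k+1) - x k‖ ^ p ≤ p * γmax * (F 0 - F N) := by
    calc (N:ℝ) * ‖x (k+1) - x k‖ ^ p
        = ∑ _j ∈ Finset.range N, ‖x (k+1) - x k‖ ^ p := by
          rw [Finset.sum_const, Finset.card_range, nsmul_eq_mul]
      _ ≤ ∑ j ∈ Finset.range N, ‖x (j+1) - x j‖ ^ p :=
          Finset.sum_le_sum fun j hj => hkmin j hj
      _ ≤ p * γmax * (F 0 - F N) := hsum
  set I : EReal := ⨅ z ∈ C, f z with hI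
  have hIle : ∀ z ∈ C, I ≤ f z := fun z hz => iInf₂_le z hz
  rcases eq_or_ne I ⊥ with hIbot | hIbot
  · rw [hIbot, hfin 0, EReal.coe_sub_bot, EReal.mul_top_of_pos
      (EReal.coe_pos.mpr (mul_pos hppos hγmaxpos))]
    exact le_top
  · have hItop : I ≠ ⊤ := by
      intro h
      exact (hdom _ (hmem 0)) (top_le_iff.mp (h ▸ hIle _ (hmem 0)))
    have hIN : I.toReal ≤ F N := EReal.toReal_le_toReal (hIle _ (hmem N)) hIbot (hdom _ (hmem N))
    have : f (x 0) - I = ((F 0 - I.toReal : ℝ) : EReal) := by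
      rw [hfin 0, ← EReal.coe_toReal hItop hIbot, ← EReal.coe_sub, EReal.toReal_coe]
    rw [this, ← EReal.coe_mul, EReal.coe_le_coe_iff]
    nlinarith [mul_nonneg (mul_pos hppos hγmaxpos).le (sub_nonneg.mpr hIN)]
end
end

section
/- Let f : ℝ^n → ℝ ∪ {+∞} be proper, lower semicontinuous, coercive, and uniformly quasiconvex with modulus φ on a closed convex set C ⊆ dom f, let {x^k}_{k≥0} be a HiPPA sequence for f on C with order p = 2 and parameters γ_k ∈ (γ_min, γ_max), and let x̄ be the unique global minimizer of f on C. Then for every k ≥ 0: γ_k·φ(‖x̄ − x^{k+1}‖) + ‖x̄ − x^{k+1}‖² ≤ ‖x̄ − x^k‖·‖x̄ − x^{k+1}‖. -/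
noncomputable section

open Set Filter

/-!
Put `d = ‖x̄ − x^{k+1}‖`. Comparing the prox objective at `x^{k+1}` with its value at the points
`z_l = l x̄ + (1 − l) x^{k+1}` of the segment towards `x̄`, and bounding `f(x^{k+1}) − f(z_l)` from
below by `l(1 − l) φ(d)` through uniform quasiconvexity (recall `f x̄ ≤ f(x^{k+1})`), gives
`2γ_k l(1 − l) φ(d) ≤ −2l⟪x^k − x^{k+1}, x̄ − x^{k+1}⟫ + l²d²`.
Dividing by `l` and letting `l → 0⁺` yields `γ_k φ(d) ≤ ⟪x^{k+1} − x^k, x̄ − x^{k+1}⟫`; adding `d²`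
turns the right-hand side into `⟪x̄ − x^k, x̄ − x^{k+1}⟫`, and Cauchy–Schwarz finishes.
-/

open Topology RealInnerProductSpace

lemma le_of_forall_one_sub_mul_le {a b c : ℝ}
    (h : ∀ l ∈ Ioo (0 : ℝ) 1, (1 - l) * a ≤ b + l * c) : a ≤ b := by
  have hlim : Tendsto (fun l : ℝ => (1 - l) * a - l * c) (𝓝[>] 0) (𝓝 a) := by
    have hcont : Continuous (fun l : ℝ => (1 - l) * a - l * c) := by fun_prop
    simpa using (hcont.tendsto 0).mono_left nhdsWithin_le_nhds
  refine le_of_tendsto hlim ?_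
  filter_upwards [Ioo_mem_nhdsGT one_pos] with l hl
  linarith [h l hl]

lemma UnifQuasiconvexOn.modulus_ne_top {E : Type*} [NormedAddCommGroup E] [NormedSpace ℝ E]
    {C : Set E} {φ : ℝ → EReal} {f : E → EReal} (hq : UnifQuasiconvexOn C φ f)
    (hC : Convex ℝ C) (hbot : ∀ z ∈ C, f z ≠ ⊥) (htop : ∀ z ∈ C, f z ≠ ⊤)
    {x y : E} (hx : x ∈ C) (hy : y ∈ C) : φ ‖x - y‖ ≠ ⊤ := by
  intro hφ
  have hmid : (1 / 2 : ℝ) • x + (1 - 1 / 2 : ℝ) • y ∈ C :=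
    hC hx hy (by norm_num) (by norm_num) (by norm_num)
  have h := hq hx hy (l := 1 / 2) (by norm_num)
  rw [hφ, EReal.coe_mul_top_of_pos (by norm_num), EReal.add_top_of_ne_bot (hbot _ hmid),
    top_le_iff, max_eq_top] at h
  exact h.elim (htop x hx) (htop y hy)

section InnerProductSpace

variable {E : Type*} [NormedAddCommGroup E] [InnerProductSpace ℝ E]

lemma norm_sub_smul_add_one_sub_smul_sq (x y w : E) (l : ℝ) :
    ‖x - (l • w + (1 - l) • y)‖ ^ 2
      = ‖x - y‖ ^ 2 - 2 * l * ⟪x - y, w - y⟫ + l ^ 2 * ‖w - y‖ ^ 2 := by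
  rw [show x - (l • w + (1 - l) • y) = (x - y) - l • (w - y) by module, norm_sub_sq_real,
    real_inner_smul_right, norm_smul, mul_pow, Real.norm_eq_abs, sq_abs]
  ring

lemma mul_le_inner_of_prox_of_quasiconvex {g : E → ℝ} {C : Set E} {γ r : ℝ} {x y w : E}
    (hC : Convex ℝ C) (hγ : 0 < γ) (hy : y ∈ C) (hw : w ∈ C)
    (hprox : ∀ z ∈ C, g y + 1 / (2 * γ) * ‖x - y‖ ^ 2 ≤ g z + 1 / (2 * γ) * ‖x - z‖ ^ 2)
    (hquasi : ∀ l ∈ Ioo (0 : ℝ) 1, g (l • w + (1 - l) • y) + l * (1 - l) * r ≤ g y) :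
    γ * r ≤ ⟪y - x, w - y⟫ := by
  set t := ⟪x - y, w - y⟫
  have ht : ⟪y - x, w - y⟫ = -t := by rw [← neg_sub x y, inner_neg_left]
  suffices 2 * γ * r ≤ -2 * t by rw [ht]; linarith
  refine le_of_forall_one_sub_mul_le (c := ‖w - y‖ ^ 2) fun l hl => ?_
  have hz := hprox (l • w + (1 - l) • y) (hC hw hy hl.1.le (by linarith [hl.2]) (by ring))
  rw [norm_sub_smul_add_one_sub_smul_sq] at hz
  have hdrop : l * (1 - l) * r ≤ (-(2 * l * t) + l ^ 2 * ‖w - y‖ ^ 2) / (2 * γ) := by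
    have hsplit : 1 / (2 * γ) * (‖x - y‖ ^ 2 - 2 * l * t + l ^ 2 * ‖w - y‖ ^ 2)
        = 1 / (2 * γ) * ‖x - y‖ ^ 2 + (-(2 * l * t) + l ^ 2 * ‖w - y‖ ^ 2) / (2 * γ) := by ring
    linarith [hquasi l hl]
  rw [le_div_iff₀ (by positivity)] at hdrop
  refine le_of_mul_le_mul_left ?_ hl.1
  linarith

theorem mul_modulus_add_sq_le_of_mem_HOProx_two {f : E → EReal} {C : Set E} {φ : ℝ → EReal}
    {γ : ℝ} {x y w : E} (hC : Convex ℝ C) (hbot : ∀ z ∈ C, f z ≠ ⊥) (htop : ∀ z ∈ C, f z ≠ ⊤)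
    (hq : UnifQuasiconvexOn C φ f) (hγ : 0 < γ) (hy : y ∈ HOProx f C 2 γ x) (hw : w ∈ C)
    (hwy : f w ≤ f y) :
    (γ : EReal) * φ ‖w - y‖ + ((‖w - y‖ ^ 2 : ℝ) : EReal) ≤ ((‖w - x‖ * ‖w - y‖ : ℝ) : EReal) := by
  obtain hφ | hφ := eq_or_ne (φ ‖w - y‖) ⊥
  · simp [hφ, EReal.coe_mul_bot_of_pos hγ]
  obtain ⟨r, hr⟩ : ∃ r : ℝ, φ ‖w - y‖ = r :=
    ⟨_, (EReal.coe_toReal (hq.modulus_ne_top hC hbot htop hw hy.1) hφ).symm⟩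
  set g : E → ℝ := fun z => (f z).toReal
  have hf : ∀ z ∈ C, f z = g z := fun z hz => (EReal.coe_toReal (htop z hz) (hbot z hz)).symm
  have hvi : γ * r ≤ ⟪y - x, w - y⟫ := by
    refine mul_le_inner_of_prox_of_quasiconvex (g := g) hC hγ hy.1 hw
      (fun z hz => ?_) (fun l hl => ?_)
    · have h := hy.2 z hz
      rw [hf y hy.1, hf z hz, Real.rpow_two, Real.rpow_two] at h
      exact_mod_cast h
    · have hz : l • w + (1 - l) • y ∈ C := hC hw hy.1 hl.1.le (by linarith [hl.2]) (by ring)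
      have h := hq hw hy.1 ⟨hl.1.le, hl.2.le⟩
      rw [max_eq_right hwy, hr, hf _ hz, hf y hy.1] at h
      exact_mod_cast h
  have hsum : ⟪w - x, w - y⟫ = ⟪y - x, w - y⟫ + ‖w - y‖ ^ 2 := by
    rw [← real_inner_self_eq_norm_sq, ← inner_add_left, sub_add_sub_cancel']
  have hcs : ⟪w - x, w - y⟫ ≤ ‖w - x‖ * ‖w - y‖ := real_inner_le_norm _ _
  rw [hr]
  exact_mod_cast (by linarith : γ * r + ‖w - y‖ ^ 2 ≤ ‖w - x‖ * ‖w - y‖)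

end InnerProductSpace

theorem statement_15_general (n : ℕ) (f : EuclideanSpace ℝ (Fin n) → EReal)
    (hbot : ∀ x, f x ≠ ⊥)
    (C : Set (EuclideanSpace ℝ (Fin n)))
    (hCconv : Convex ℝ C)
    (hdom : ∀ x ∈ C, f x ≠ ⊤)
    (φ : ℝ → EReal)
    (hquasi : UnifQuasiconvexOn C φ f)
    (γmin γmax : ℝ) (hγmin : 0 < γmin)
    (x : ℕ → EuclideanSpace ℝ (Fin n)) (γ : ℕ → ℝ)
    (hγk : ∀ k, γ k ∈ Set.Ioo γmin γmax)
    (hstep : ∀ k, x (k + 1) ∈ HOProx f C 2 (γ k) (x k))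
    (xb : EuclideanSpace ℝ (Fin n)) (hxbC : xb ∈ C)
    (hxbmin : ∀ y ∈ C, f xb ≤ f y) :
    ∀ k : ℕ,
      ((γ k : ℝ) : EReal) * φ ‖xb - x (k + 1)‖
          + ((‖xb - x (k + 1)‖ ^ 2 : ℝ) : EReal)
        ≤ ((‖xb - x k‖ * ‖xb - x (k + 1)‖ : ℝ) : EReal) := fun k =>
  mul_modulus_add_sq_le_of_mem_HOProx_two hCconv (fun z _ => hbot z) hdom hquasi
    (hγmin.trans (hγk k).1) (hstep k) hxbC (hxbmin _ (hstep k).1)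

/-- For a HiPPA sequence with order `p = 2` and the unique global
minimizer `x̄` of `f` on `C`, for every `k`:
`γ_k·φ(‖x̄ − x^{k+1}‖) + ‖x̄ − x^{k+1}‖² ≤ ‖x̄ − x^k‖·‖x̄ − x^{k+1}‖`. -/
theorem statement_15 (n : ℕ) (f : EuclideanSpace ℝ (Fin n) → EReal)
    (hproper : ∃ x, f x ≠ ⊤) (hbot : ∀ x, f x ≠ ⊥)
    (hlsc : LowerSemicontinuous f) (hcoer : Coercive f)
    (C : Set (EuclideanSpace ℝ (Fin n)))
    (hCclosed : IsClosed C) (hCconv : Convex ℝ C)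
    (hdom : ∀ x ∈ C, f x ≠ ⊤)
    (φ : ℝ → EReal) (hφ : IsModulus φ)
    (hquasi : UnifQuasiconvexOn C φ f)
    (γmin γmax : ℝ) (hγmin : 0 < γmin) (hγ : γmin < γmax)
    (x : ℕ → EuclideanSpace ℝ (Fin n)) (γ : ℕ → ℝ)
    (hx0 : x 0 ∈ C)
    (hγk : ∀ k, γ k ∈ Set.Ioo γmin γmax)
    (hstep : ∀ k, x (k + 1) ∈ HOProx f C 2 (γ k) (x k))
    (xb : EuclideanSpace ℝ (Fin n)) (hxbC : xb ∈ C)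
    (hxbmin : ∀ y ∈ C, f xb ≤ f y)
    (hxbuniq : ∀ z ∈ C, (∀ y ∈ C, f z ≤ f y) → z = xb) :
    ∀ k : ℕ,
      ((γ k : ℝ) : EReal) * φ ‖xb - x (k + 1)‖
          + ((‖xb - x (k + 1)‖ ^ 2 : ℝ) : EReal)
        ≤ ((‖xb - x k‖ * ‖xb - x (k + 1)‖ : ℝ) : EReal) :=
  statement_15_general n f hbot C hCconv hdom φ hquasi γmin γmax hγmin x γ hγk hstep xb hxbC hxbmin
end
end

section
/- Let f : ℝ^n → ℝ ∪ {+∞} be proper, lower semicontinuous, coercive, and uniformly quasiconvex with modulus φ on a closed convex set C ⊆ dom f, let p > 2, set σ̂_p = (1/2)^{(3p−2)/2}, let {x^k}_{k≥0} be a HiPPA sequence for f on C with order p and parameters γ_k ∈ (γ_min, γ_max), and let x̄ be the unique global minimizer of f on C. Then for every k ≥ 0: γ_k·φ(‖x̄ − x^{k+1}‖) + (σ̂_p/p)·‖x̄ − x^{k+1}‖^p ≤ ‖x̄ − x^k‖^{p−1}·‖x̄ − x^{k+1}‖. -/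
noncomputable section

open Set Filter

/-!
Write `y = x^{k+1}` and `x = x^k`. For `l ∈ (0, 1)` the point `y + l (x̄ - y)` lies in `C`; uniform
quasiconvexity at the minimizer `x̄` and the minimality of `y` in the proximal problem give
`l (1 - l) φ(‖x̄ - y‖) ≤ (‖x - y - l (x̄ - y)‖^p - ‖x - y‖^p) / (p γ)`. Dividing by `l` and letting
`l → 0⁺` turns the right side into a derivative: `γ φ(‖x̄ - y‖) ≤ ‖y - x‖^(p-2) ⟪y - x, x̄ - y⟫`.
This is bounded by the strong monotonicity
`⟪‖u‖^(p-2) u - ‖v‖^(p-2) v, u - v⟫ ≥ (1/2)^(p-1) ‖u - v‖^p` of the gradient of `‖·‖^p / p`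
(for `p ≥ 2`) with `u = x̄ - x`, `v = y - x`, Cauchy–Schwarz, and `σ̂_p / p ≤ (1/2)^(p-1)`.
-/

open Topology
open scoped RealInnerProductSpace

theorem le_of_hasDerivAt_of_forall_mul_one_sub_le {g : ℝ → ℝ} {g' a : ℝ}
    (hg : HasDerivAt g g' 0) (h : ∀ l ∈ Ioo (0 : ℝ) 1, l * (1 - l) * a ≤ g l - g 0) :
    a ≤ g' := by
  have hslope := hg.tendsto_slope_zero_right
  simp only [zero_add, smul_eq_mul] at hslope
  have hlin : Tendsto (fun l : ℝ => (1 - l) * a) (𝓝[>] 0) (𝓝 a) := by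
    have : ContinuousAt (fun l : ℝ => (1 - l) * a) 0 := by fun_prop
    simpa using this.tendsto.mono_left nhdsWithin_le_nhds
  refine le_of_tendsto_of_tendsto hlin hslope ?_
  filter_upwards [Ioo_mem_nhdsGT (zero_lt_one' ℝ)] with l hl
  rw [le_inv_mul_iff₀ hl.1, ← mul_assoc]
  exact h l hl

theorem half_rpow_div_le_half_rpow_sub_one {p : ℝ} (hp : 1 ≤ p) :
    (1 / 2 : ℝ) ^ ((3 * p - 2) / 2) / p ≤ (1 / 2 : ℝ) ^ (p - 1) := by
  rw [show (3 * p - 2) / 2 = (p - 1) + p / 2 by ring, Real.rpow_add (by norm_num),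
    div_le_iff₀ (by linarith)]
  have hle : (1 / 2 : ℝ) ^ (p / 2) ≤ 1 := Real.rpow_le_one (by norm_num) (by norm_num) (by linarith)
  have hpos : (0 : ℝ) < (1 / 2) ^ (p - 1) := by positivity
  nlinarith

theorem half_rpow_mul_norm_sub_rpow_le {E : Type*} [SeminormedAddCommGroup E] {p : ℝ} (hp : 2 ≤ p)
    (u v : E) :
    (1 / 2 : ℝ) ^ (p - 1) * ‖u - v‖ ^ p
      ≤ (‖u‖ ^ (p - 2) + ‖v‖ ^ (p - 2)) / 2 * ‖u - v‖ ^ 2 := by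
  have hw := norm_nonneg (u - v)
  have hhalf : (‖u - v‖ / 2) ^ (p - 2) ≤ ‖u‖ ^ (p - 2) + ‖v‖ ^ (p - 2) := by
    have hu := Real.rpow_nonneg (norm_nonneg u) (p - 2)
    have hv := Real.rpow_nonneg (norm_nonneg v) (p - 2)
    have htri := norm_sub_le u v
    rcases le_total ‖u‖ ‖v‖ with h | h
    · linarith [Real.rpow_le_rpow (by positivity) (by linarith : ‖u - v‖ / 2 ≤ ‖v‖)
        (by linarith : 0 ≤ p - 2)]
    · linarith [Real.rpow_le_rpow (by positivity) (by linarith : ‖u - v‖ / 2 ≤ ‖u‖)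
        (by linarith : 0 ≤ p - 2)]
  have hsplit : (1 / 2 : ℝ) ^ (p - 1) * ‖u - v‖ ^ p
      = (‖u - v‖ / 2) ^ (p - 2) / 2 * ‖u - v‖ ^ 2 := by
    rw [div_eq_mul_one_div ‖u - v‖, Real.mul_rpow hw (by norm_num),
      show p - 1 = (p - 2) + 1 by ring, show p = (p - 2) + 2 by ring,
      Real.rpow_add (by norm_num), Real.rpow_add' hw (by linarith), Real.rpow_two]
    ring_nf
  rw [hsplit]
  gcongr

section InnerProductSpace

variable {E : Type*} [NormedAddCommGroup E] [InnerProductSpace ℝ E] {p : ℝ}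

theorem hasDerivAt_norm_sub_smul_rpow (hp : 1 < p) (w d : E) :
    HasDerivAt (fun l : ℝ => ‖w - l • d‖ ^ p) (-(p * ‖w‖ ^ (p - 2) * ⟪w, d⟫)) 0 := by
  have hline : HasDerivAt (fun l : ℝ => w - l • d) (-d) 0 := by
    simpa using ((hasDerivAt_id (0 : ℝ)).smul_const d).const_sub w
  have := (hasFDerivAt_norm_rpow (w - (0 : ℝ) • d) hp).comp_hasDerivAt (0 : ℝ) hline
  simpa [Function.comp_def, inner_neg_right, mul_assoc] using this

theorem rpow_sum_mul_norm_sub_sq_le_inner (hp : 2 ≤ p) (u v : E) :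
    (‖u‖ ^ (p - 2) + ‖v‖ ^ (p - 2)) / 2 * ‖u - v‖ ^ 2
      ≤ ‖u‖ ^ (p - 2) * ⟪u, u - v⟫ - ‖v‖ ^ (p - 2) * ⟪v, u - v⟫ := by
  -- the difference is `(‖u‖^(p-2) - ‖v‖^(p-2)) (‖u‖² - ‖v‖²) / 2`, a product of two terms of equal sign
  have hsign : 0 ≤ (‖u‖ ^ (p - 2) - ‖v‖ ^ (p - 2)) * (‖u‖ ^ 2 - ‖v‖ ^ 2) := by
    rcases le_total ‖u‖ ‖v‖ with h | h
    · exact mul_nonneg_of_nonpos_of_nonpos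
        (sub_nonpos.2 (Real.rpow_le_rpow (norm_nonneg u) h (by linarith)))
        (sub_nonpos.2 (pow_le_pow_left₀ (norm_nonneg u) h 2))
    · exact mul_nonneg
        (sub_nonneg.2 (Real.rpow_le_rpow (norm_nonneg v) h (by linarith)))
        (sub_nonneg.2 (pow_le_pow_left₀ (norm_nonneg v) h 2))
  rw [norm_sub_sq_real, inner_sub_right, inner_sub_right, real_inner_self_eq_norm_sq,
    real_inner_self_eq_norm_sq, real_inner_comm v u]
  nlinarith [hsign]

theorem norm_rpow_sub_two_mul_inner_le (hp : 2 ≤ p) (u v : E) :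
    ‖v‖ ^ (p - 2) * ⟪v, u - v⟫ + (1 / 2 : ℝ) ^ (p - 1) * ‖u - v‖ ^ p
      ≤ ‖u‖ ^ (p - 1) * ‖u - v‖ := by
  have hcs : ‖u‖ ^ (p - 2) * ⟪u, u - v⟫ ≤ ‖u‖ ^ (p - 1) * ‖u - v‖ := by
    calc ‖u‖ ^ (p - 2) * ⟪u, u - v⟫ ≤ ‖u‖ ^ (p - 2) * (‖u‖ * ‖u - v‖) :=
          mul_le_mul_of_nonneg_left (real_inner_le_norm u (u - v)) (by positivity)
      _ = ‖u‖ ^ (p - 1) * ‖u - v‖ := by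
          rw [show p - 1 = (p - 2) + 1 by ring,
            Real.rpow_add' (norm_nonneg u) (by linarith), Real.rpow_one, mul_assoc]
  linarith [rpow_sum_mul_norm_sub_sq_le_inner hp u v, half_rpow_mul_norm_sub_rpow_le hp u v]

theorem mul_modulus_le_inner_of_mem_HOProx {C : Set E} {φ : ℝ → EReal} {f : E → EReal}
    {γ : ℝ} {x y xb : E} (hp : 1 < p) (hγ : 0 < γ) (hC : Convex ℝ C)
    (hquasi : UnifQuasiconvexOn C φ f) (hbot : ∀ z, f z ≠ ⊥) (hdom : ∀ z ∈ C, f z ≠ ⊤)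
    (hxb : xb ∈ C) (hmin : f xb ≤ f y) (hy : y ∈ HOProx f C p γ x) :
    (γ : EReal) * φ ‖xb - y‖ ≤ ((‖y - x‖ ^ (p - 2) * ⟪y - x, xb - y⟫ : ℝ) : EReal) := by
  obtain ⟨hyC, hyopt⟩ := hy
  have hzC : ∀ l ∈ Icc (0 : ℝ) 1, l • xb + (1 - l) • y ∈ C := fun l hl =>
    hC hxb hyC hl.1 (by linarith [hl.2]) (by ring)
  have hq : ∀ l ∈ Icc (0 : ℝ) 1,
      f (l • xb + (1 - l) • y) + ((l * (1 - l) : ℝ) : EReal) * φ ‖xb - y‖ ≤ f y := fun l hl =>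
    max_eq_right hmin ▸ hquasi hxb hyC hl
  obtain ⟨a, ha⟩ : ∃ a : ℝ, (a : EReal) = f y := CanLift.prf _ ⟨hdom y hyC, hbot y⟩
  induction hφ : φ ‖xb - y‖ with
  | bot => simp [EReal.coe_mul_bot_of_pos hγ]
  | top =>
    have h := hq (1 / 2) ⟨by norm_num, by norm_num⟩
    rw [hφ, EReal.coe_mul_top_of_pos (by norm_num), EReal.add_top_of_ne_bot (hbot _)] at h
    exact absurd (top_le_iff.1 h) (hdom y hyC)
  | coe F =>
    have hslope : ∀ l ∈ Ioo (0 : ℝ) 1, l * (1 - l) * (p * γ * F)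
        ≤ ‖x - y - l • (xb - y)‖ ^ p - ‖x - y - (0 : ℝ) • (xb - y)‖ ^ p := by
      intro l hl
      have hl' : l ∈ Icc (0 : ℝ) 1 := Ioo_subset_Icc_self hl
      obtain ⟨b, hb⟩ : ∃ b : ℝ, (b : EReal) = f (l • xb + (1 - l) • y) :=
        CanLift.prf _ ⟨hdom _ (hzC l hl'), hbot _⟩
      have hqr := hq l hl'
      have hopt := hyopt _ (hzC l hl')
      rw [← hb, ← ha, hφ, ← EReal.coe_mul, ← EReal.coe_add, EReal.coe_le_coe_iff] at hqr
      rw [← hb, ← ha, ← EReal.coe_add, ← EReal.coe_add, EReal.coe_le_coe_iff,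
        show x - (l • xb + (1 - l) • y) = x - y - l • (xb - y) by
          rw [smul_sub, sub_smul, one_smul]; abel] at hopt
      have hpγ : 0 < p * γ := mul_pos (by linarith) hγ
      rw [zero_smul, sub_zero]
      field_simp at hopt
      nlinarith
    have hF := le_of_hasDerivAt_of_forall_mul_one_sub_le
      (hasDerivAt_norm_sub_smul_rpow hp (x - y) (xb - y)) hslope
    rw [← norm_neg (x - y), neg_sub, ← neg_sub y x, inner_neg_left] at hF
    rw [← EReal.coe_mul, EReal.coe_le_coe_iff]
    nlinarith

theorem mul_modulus_add_le_of_mem_HOProx {C : Set E} {φ : ℝ → EReal} {f : E → EReal}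
    {γ : ℝ} {x y xb : E} (hp : 2 ≤ p) (hγ : 0 < γ) (hC : Convex ℝ C)
    (hquasi : UnifQuasiconvexOn C φ f) (hbot : ∀ z, f z ≠ ⊥) (hdom : ∀ z ∈ C, f z ≠ ⊤)
    (hxb : xb ∈ C) (hmin : f xb ≤ f y) (hy : y ∈ HOProx f C p γ x) :
    (γ : EReal) * φ ‖xb - y‖ + (((1 / 2 : ℝ) ^ ((3 * p - 2) / 2) / p * ‖xb - y‖ ^ p : ℝ) : EReal)
      ≤ ((‖xb - x‖ ^ (p - 1) * ‖xb - y‖ : ℝ) : EReal) := by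
  have hmono := norm_rpow_sub_two_mul_inner_le hp (xb - x) (y - x)
  rw [sub_sub_sub_cancel_right] at hmono
  have hconst : (1 / 2 : ℝ) ^ ((3 * p - 2) / 2) / p * ‖xb - y‖ ^ p
      ≤ (1 / 2 : ℝ) ^ (p - 1) * ‖xb - y‖ ^ p := by
    gcongr
    exact half_rpow_div_le_half_rpow_sub_one (by linarith)
  calc _ ≤ ((‖y - x‖ ^ (p - 2) * ⟪y - x, xb - y⟫ : ℝ) : EReal)
          + (((1 / 2 : ℝ) ^ (p - 1) * ‖xb - y‖ ^ p : ℝ) : EReal) :=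
        add_le_add (mul_modulus_le_inner_of_mem_HOProx (by linarith) hγ hC hquasi hbot hdom hxb
          hmin hy) (EReal.coe_le_coe_iff.2 hconst)
    _ ≤ _ := by
        rw [← EReal.coe_add, EReal.coe_le_coe_iff]
        exact hmono

end InnerProductSpace

theorem statement_16_general (n : ℕ) (f : EuclideanSpace ℝ (Fin n) → EReal)
    (hbot : ∀ x, f x ≠ ⊥)
    (C : Set (EuclideanSpace ℝ (Fin n)))
    (hCconv : Convex ℝ C)
    (hdom : ∀ x ∈ C, f x ≠ ⊤)
    (φ : ℝ → EReal)
    (hquasi : UnifQuasiconvexOn C φ f)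
    (p γmin γmax : ℝ) (hp : 2 < p) (hγmin : 0 < γmin)
    (x : ℕ → EuclideanSpace ℝ (Fin n)) (γ : ℕ → ℝ)
    (hγk : ∀ k, γ k ∈ Set.Ioo γmin γmax)
    (hstep : ∀ k, x (k + 1) ∈ HOProx f C p (γ k) (x k))
    (xb : EuclideanSpace ℝ (Fin n)) (hxbC : xb ∈ C)
    (hxbmin : ∀ y ∈ C, f xb ≤ f y) :
    ∀ k : ℕ,
      ((γ k : ℝ) : EReal) * φ ‖xb - x (k + 1)‖
          + (((((1 : ℝ) / 2) ^ ((3 * p - 2) / 2) / p) * ‖xb - x (k + 1)‖ ^ p : ℝ) : EReal)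
        ≤ ((‖xb - x k‖ ^ (p - 1) * ‖xb - x (k + 1)‖ : ℝ) : EReal) := fun k =>
  mul_modulus_add_le_of_mem_HOProx hp.le (hγmin.trans (hγk k).1) hCconv hquasi hbot hdom hxbC
    (hxbmin _ (hstep k).1) (hstep k)

/-- For a HiPPA sequence with order `p > 2`,
`σ̂_p = (1/2)^((3p−2)/2)` and the unique global minimizer `x̄` of `f` on `C`, for every
`k`: `γ_k·φ(‖x̄ − x^{k+1}‖) + (σ̂_p/p)·‖x̄ − x^{k+1}‖^p ≤ ‖x̄ − x^k‖^{p−1}·‖x̄ − x^{k+1}‖`. -/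
theorem statement_16 (n : ℕ) (f : EuclideanSpace ℝ (Fin n) → EReal)
    (hproper : ∃ x, f x ≠ ⊤) (hbot : ∀ x, f x ≠ ⊥)
    (hlsc : LowerSemicontinuous f) (hcoer : Coercive f)
    (C : Set (EuclideanSpace ℝ (Fin n)))
    (hCclosed : IsClosed C) (hCconv : Convex ℝ C)
    (hdom : ∀ x ∈ C, f x ≠ ⊤)
    (φ : ℝ → EReal) (hφ : IsModulus φ)
    (hquasi : UnifQuasiconvexOn C φ f)
    (p γmin γmax : ℝ) (hp : 2 < p) (hγmin : 0 < γmin) (hγ : γmin < γmax)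
    (x : ℕ → EuclideanSpace ℝ (Fin n)) (γ : ℕ → ℝ)
    (hx0 : x 0 ∈ C)
    (hγk : ∀ k, γ k ∈ Set.Ioo γmin γmax)
    (hstep : ∀ k, x (k + 1) ∈ HOProx f C p (γ k) (x k))
    (xb : EuclideanSpace ℝ (Fin n)) (hxbC : xb ∈ C)
    (hxbmin : ∀ y ∈ C, f xb ≤ f y)
    (hxbuniq : ∀ z ∈ C, (∀ y ∈ C, f z ≤ f y) → z = xb) :
    ∀ k : ℕ,
      ((γ k : ℝ) : EReal) * φ ‖xb - x (k + 1)‖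
          + (((((1 : ℝ) / 2) ^ ((3 * p - 2) / 2) / p) * ‖xb - x (k + 1)‖ ^ p : ℝ) : EReal)
        ≤ ((‖xb - x k‖ ^ (p - 1) * ‖xb - x (k + 1)‖ : ℝ) : EReal) :=
  statement_16_general n f hbot C hCconv hdom φ hquasi p γmin γmax hp hγmin x γ hγk hstep xb hxbC
    hxbmin
end
end

section
/- Let f : ℝ^n → ℝ ∪ {+∞} be proper, lower semicontinuous, coercive, and uniformly quasiconvex with modulus φ on a closed convex set C ⊆ dom f, and suppose φ(t) ≥ ρ t² for all t ≥ 0, where ρ > 0. Let {x^k}_{k≥0} be a HiPPA sequence for f on C with order p = 2 and parameters γ_k ∈ (γ_min, γ_max), and let x̄ be the unique global minimizer of f on C. Then the convergence is linear: for every k ≥ 0, ‖x̄ − x^{k+1}‖ ≤ (1/(1 + γ_min·ρ))·‖x̄ − x^k‖, and 1/(1 + γ_min·ρ) < 1. -/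
/-!
Let `y` be a proximal step from `x` with parameter `γ`, and `x̄` a point of `C` with `f x̄ ≤ f y`.
Comparing `y` with the points `l • x̄ + (1 - l) • y` of `C`, uniform quasiconvexity with
`φ(t) ≥ ρ t²` and the minimality of `y` give, after dividing by `l` and letting `l → 0⁺`,
the variational inequality `⟪x - y, x̄ - y⟫ ≤ -γ ρ ‖x̄ - y‖²`.
Splitting `‖x̄ - y‖² = ⟪x̄ - x, x̄ - y⟫ + ⟪x - y, x̄ - y⟫` and using Cauchy–Schwarz then yields
`(1 + γ ρ) ‖x̄ - y‖ ≤ ‖x̄ - x‖`.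
-/

noncomputable section

open Set Filter

open Topology
open scoped RealInnerProductSpace

lemma le_of_forall_one_sub_mul_le_add_mul {a b c : ℝ}
    (h : ∀ l ∈ Ioc (0 : ℝ) 1, (1 - l) * a ≤ b + l * c) : a ≤ b := by
  have hlim : Tendsto (fun l : ℝ => b + l * c - (1 - l) * a) (𝓝[>] 0) (𝓝 (b - a)) := by
    have hcont : Continuous fun l : ℝ => b + l * c - (1 - l) * a := by fun_prop
    simpa using (hcont.tendsto 0).mono_left nhdsWithin_le_nhds
  have hnonneg : 0 ≤ b - a := ge_of_tendsto hlim <| by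
    filter_upwards [Ioc_mem_nhdsGT one_pos] with l hl using sub_nonneg.2 (h l hl)
  linarith

lemma UnifQuasiconvexOn.add_mul_sq_le {E : Type*} [NormedAddCommGroup E] [NormedSpace ℝ E]
    {C : Set E} {f : E → EReal} {φ : ℝ → EReal} {ρ : ℝ}
    (hquasi : UnifQuasiconvexOn C φ f) (hlb : ∀ t : ℝ, 0 ≤ t → ((ρ * t ^ 2 : ℝ) : EReal) ≤ φ t)
    {x y : E} (hx : x ∈ C) (hy : y ∈ C) {l : ℝ} (hl : l ∈ Icc (0 : ℝ) 1) :
    f (l • x + (1 - l) • y) + ((l * (1 - l) * (ρ * ‖x - y‖ ^ 2) : ℝ) : EReal)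
      ≤ max (f x) (f y) := by
  have hcoef : (0 : EReal) ≤ ((l * (1 - l) : ℝ) : EReal) :=
    EReal.coe_nonneg.2 (mul_nonneg hl.1 (sub_nonneg.2 hl.2))
  calc f (l • x + (1 - l) • y) + ((l * (1 - l) * (ρ * ‖x - y‖ ^ 2) : ℝ) : EReal)
      = f (l • x + (1 - l) • y)
          + ((l * (1 - l) : ℝ) : EReal) * ((ρ * ‖x - y‖ ^ 2 : ℝ) : EReal) := by
        rw [EReal.coe_mul]
    _ ≤ f (l • x + (1 - l) • y) + ((l * (1 - l) : ℝ) : EReal) * φ ‖x - y‖ := by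
        gcongr
        exact hlb _ (norm_nonneg _)
    _ ≤ max (f x) (f y) := hquasi hx hy hl

lemma HOProx.toReal_add_sq_le {E : Type*} [NormedAddCommGroup E] {C : Set E} {f : E → EReal}
    (hdom : ∀ z ∈ C, f z ≠ ⊤) (hbot : ∀ z ∈ C, f z ≠ ⊥)
    {γ : ℝ} {x y w : E} (hy : y ∈ HOProx f C 2 γ x) (hw : w ∈ C) :
    (f y).toReal + 1 / (2 * γ) * ‖x - y‖ ^ 2 ≤ (f w).toReal + 1 / (2 * γ) * ‖x - w‖ ^ 2 := by
  have h := hy.2 w hw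
  rw [← EReal.coe_toReal (hdom y hy.1) (hbot y hy.1), ← EReal.coe_toReal (hdom w hw) (hbot w hw),
    Real.rpow_two, Real.rpow_two] at h
  exact_mod_cast h

section InnerProductSpace

variable {E : Type*} [NormedAddCommGroup E] [InnerProductSpace ℝ E]
  {f : E → EReal} {C : Set E}

lemma inner_sub_le_of_mem_HOProx_two {φ : ℝ → EReal} {ρ γ : ℝ} (hC : Convex ℝ C)
    (hdom : ∀ z ∈ C, f z ≠ ⊤) (hbot : ∀ z ∈ C, f z ≠ ⊥) (hquasi : UnifQuasiconvexOn C φ f)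
    (hlb : ∀ t : ℝ, 0 ≤ t → ((ρ * t ^ 2 : ℝ) : EReal) ≤ φ t) (hγ : 0 < γ)
    {x y x' : E} (hy : y ∈ HOProx f C 2 γ x) (hx' : x' ∈ C) (hle : f x' ≤ f y) :
    ⟪x - y, x' - y⟫ ≤ -(γ * ρ * ‖x' - y‖ ^ 2) := by
  set c := 1 / (2 * γ)
  have key : ρ * ‖x' - y‖ ^ 2 ≤ -2 * c * ⟪x - y, x' - y⟫ := by
    refine le_of_forall_one_sub_mul_le_add_mul (c := c * ‖x' - y‖ ^ 2) fun l hl => ?_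
    set w := l • x' + (1 - l) • y
    have hw : w ∈ C := hC hx' hy.1 hl.1.le (sub_nonneg.2 hl.2) (by ring)
    have hdescent : (f w).toReal + l * (1 - l) * (ρ * ‖x' - y‖ ^ 2) ≤ (f y).toReal := by
      have h := hquasi.add_mul_sq_le hlb hx' hy.1 (Ioc_subset_Icc_self hl)
      rw [max_eq_right hle, ← EReal.coe_toReal (hdom w hw) (hbot w hw),
        ← EReal.coe_toReal (hdom y hy.1) (hbot y hy.1)] at h
      exact_mod_cast h
    have hprox := HOProx.toReal_add_sq_le hdom hbot hy hw
    have hexpand :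
        ‖x - w‖ ^ 2 = ‖x - y‖ ^ 2 - 2 * l * ⟪x - y, x' - y⟫ + l ^ 2 * ‖x' - y‖ ^ 2 := by
      rw [show x - w = (x - y) - l • (x' - y) by module, norm_sub_sq_real, real_inner_smul_right,
        norm_smul, Real.norm_eq_abs, mul_pow, sq_abs]
      ring
    rw [hexpand] at hprox
    have h : l * ((1 - l) * (ρ * ‖x' - y‖ ^ 2))
        ≤ l * (-2 * c * ⟪x - y, x' - y⟫ + l * (c * ‖x' - y‖ ^ 2)) := by
      linarith
    exact le_of_mul_le_mul_left h hl.1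
  have hc : 2 * γ * c = 1 := mul_one_div_cancel (by positivity)
  calc ⟪x - y, x' - y⟫ = -(γ * (-2 * c * ⟪x - y, x' - y⟫)) := by
        linear_combination (-⟪x - y, x' - y⟫) * hc
    _ ≤ -(γ * (ρ * ‖x' - y‖ ^ 2)) := by gcongr
    _ = -(γ * ρ * ‖x' - y‖ ^ 2) := by ring

lemma mul_norm_sub_le_norm_sub_of_inner_le {x y z : E} {κ : ℝ}
    (h : ⟪x - y, z - y⟫ ≤ -(κ * ‖z - y‖ ^ 2)) : (1 + κ) * ‖z - y‖ ≤ ‖z - x‖ := by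
  rcases (norm_nonneg (z - y)).eq_or_lt with h0 | hpos
  · rw [← h0, mul_zero]
    exact norm_nonneg _
  have hsplit : ‖z - y‖ ^ 2 = ⟪z - x, z - y⟫ + ⟪x - y, z - y⟫ := by
    rw [← inner_add_left, sub_add_sub_cancel, real_inner_self_eq_norm_sq]
  have hcs := real_inner_le_norm (z - x) (z - y)
  refine le_of_mul_le_mul_right ?_ hpos
  linarith

end InnerProductSpace

theorem statement_17_general (n : ℕ) (f : EuclideanSpace ℝ (Fin n) → EReal)
    (hbot : ∀ x, f x ≠ ⊥)
    (C : Set (EuclideanSpace ℝ (Fin n)))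
    (hCconv : Convex ℝ C)
    (hdom : ∀ x ∈ C, f x ≠ ⊤)
    (φ : ℝ → EReal)
    (hquasi : UnifQuasiconvexOn C φ f)
    (ρ : ℝ) (hρ : 0 < ρ)
    (hlb : ∀ t : ℝ, 0 ≤ t → ((ρ * t ^ 2 : ℝ) : EReal) ≤ φ t)
    (γmin γmax : ℝ) (hγmin : 0 < γmin)
    (x : ℕ → EuclideanSpace ℝ (Fin n)) (γ : ℕ → ℝ)
    (hγk : ∀ k, γ k ∈ Set.Ioo γmin γmax)
    (hstep : ∀ k, x (k + 1) ∈ HOProx f C 2 (γ k) (x k))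
    (xb : EuclideanSpace ℝ (Fin n)) (hxbC : xb ∈ C)
    (hxbmin : ∀ y ∈ C, f xb ≤ f y) :
    (1 / (1 + γmin * ρ) < 1) ∧
    ∀ k : ℕ, ‖xb - x (k + 1)‖ ≤ (1 / (1 + γmin * ρ)) * ‖xb - x k‖ := by
  have hrate : 1 < 1 + γmin * ρ := lt_add_of_pos_right 1 (mul_pos hγmin hρ)
  refine ⟨(div_lt_one (by linarith)).2 hrate, fun k => ?_⟩
  have hγmin_le : γmin ≤ γ k := (hγk k).1.le
  have hvar := inner_sub_le_of_mem_HOProx_two hCconv hdom (fun z _ => hbot z) hquasi hlb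
    (hγmin.trans_le hγmin_le) (hstep k) hxbC (hxbmin _ (hstep k).1)
  rw [one_div_mul_eq_div, le_div_iff₀ (by linarith)]
  calc ‖xb - x (k + 1)‖ * (1 + γmin * ρ) ≤ (1 + γ k * ρ) * ‖xb - x (k + 1)‖ := by
        rw [mul_comm]; gcongr
    _ ≤ ‖xb - x k‖ := mul_norm_sub_le_norm_sub_of_inner_le hvar

/-- **Linear convergence for `p = 2`.**  If `φ(t) ≥ ρt²` for all `t ≥ 0`
with `ρ > 0`, then for a HiPPA sequence of order `p = 2` and the unique global minimizer
`x̄`, `‖x̄ − x^{k+1}‖ ≤ (1/(1 + γ_min·ρ))·‖x̄ − x^k‖` for all `k`, and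
`1/(1 + γ_min·ρ) < 1`. -/
theorem statement_17 (n : ℕ) (f : EuclideanSpace ℝ (Fin n) → EReal)
    (hproper : ∃ x, f x ≠ ⊤) (hbot : ∀ x, f x ≠ ⊥)
    (hlsc : LowerSemicontinuous f) (hcoer : Coercive f)
    (C : Set (EuclideanSpace ℝ (Fin n)))
    (hCclosed : IsClosed C) (hCconv : Convex ℝ C)
    (hdom : ∀ x ∈ C, f x ≠ ⊤)
    (φ : ℝ → EReal) (hφ : IsModulus φ)
    (hquasi : UnifQuasiconvexOn C φ f)
    (ρ : ℝ) (hρ : 0 < ρ)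
    (hlb : ∀ t : ℝ, 0 ≤ t → ((ρ * t ^ 2 : ℝ) : EReal) ≤ φ t)
    (γmin γmax : ℝ) (hγmin : 0 < γmin) (hγ : γmin < γmax)
    (x : ℕ → EuclideanSpace ℝ (Fin n)) (γ : ℕ → ℝ)
    (hx0 : x 0 ∈ C)
    (hγk : ∀ k, γ k ∈ Set.Ioo γmin γmax)
    (hstep : ∀ k, x (k + 1) ∈ HOProx f C 2 (γ k) (x k))
    (xb : EuclideanSpace ℝ (Fin n)) (hxbC : xb ∈ C)
    (hxbmin : ∀ y ∈ C, f xb ≤ f y)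
    (hxbuniq : ∀ z ∈ C, (∀ y ∈ C, f z ≤ f y) → z = xb) :
    (1 / (1 + γmin * ρ) < 1) ∧
    ∀ k : ℕ, ‖xb - x (k + 1)‖ ≤ (1 / (1 + γmin * ρ)) * ‖xb - x k‖ :=
  statement_17_general n f hbot C hCconv hdom φ hquasi ρ hρ hlb γmin γmax hγmin x γ hγk hstep xb
    hxbC hxbmin
end
end

section
/- Let f : ℝ^n → ℝ ∪ {+∞} be proper, lower semicontinuous, coercive, and uniformly quasiconvex with modulus φ on a closed convex set C ⊆ dom f. Suppose there exist q ≥ 2 and ρ_q > 0 such that φ(t) ≥ ρ_q t^q for all t ≥ 0, and let p > q. Let {x^k}_{k≥0} be a HiPPA sequence for f on C with order p and parameters γ_k ∈ (γ_min, γ_max), and let x̄ be the unique global minimizer of f on C. Then the convergence is superlinear of degree (p−1)/(q−1): there exists a constant K > 0 such that for every k ≥ 0, ‖x^{k+1} − x̄‖ ≤ K·‖x^k − x̄‖^{(p−1)/(q−1)}. -/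
/-!
Write `u = xᵏ`, `v = xᵏ⁺¹`. Testing the prox objective of `v` against `x̄` gives
`‖u - v‖ ≤ ‖u - x̄‖`. Testing it against the midpoint `z` of `x̄` and `v`, where uniform
quasiconvexity gives `f z + ρ ‖v - x̄‖ ^ q / 4 ≤ f v`, gives
`ρ ‖v - x̄‖ ^ q ≤ 4 / (p γ) * (‖u - z‖ ^ p - ‖u - v‖ ^ p)`. Since
`‖u - v‖ ≤ ‖u - z‖ ≤ ‖u - v‖ + ‖v - x̄‖ / 2 ≤ 2 ‖u - x̄‖`, the convexity of `t ↦ t ^ p` bounds the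
right-hand side by `2 ^ p / γ * ‖u - x̄‖ ^ (p - 1) * ‖v - x̄‖`. Dividing by `‖v - x̄‖` and taking
`(q - 1)`-th roots gives the claim with `K = (2 ^ p / (γ_min ρ)) ^ (1 / (q - 1))`.
-/

noncomputable section

open Set Filter

namespace Real

theorem rpow_sub_rpow_le_mul_sub {a b p : ℝ} (hb : 0 ≤ b) (hba : b ≤ a) (hp : 1 ≤ p) :
    a ^ p - b ^ p ≤ p * a ^ (p - 1) * (a - b) := by
  rcases hba.eq_or_lt with rfl | hba
  · simp
  have hslope := (convexOn_rpow hp).slope_le_of_hasDerivAt hb (hb.trans hba.le) hba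
    (hasDerivAt_rpow_const (Or.inr hp))
  rwa [slope_def_field, div_le_iff₀ (sub_pos.2 hba)] at hslope

theorem le_rpow_inv_of_mul_rpow_le_mul {d M ρ q : ℝ} (hd : 0 ≤ d) (hM : 0 ≤ M) (hρ : 0 < ρ)
    (hq : 1 < q) (h : ρ * d ^ q ≤ M * d) : d ≤ (M / ρ) ^ (q - 1)⁻¹ := by
  rcases hd.eq_or_lt with rfl | hd
  · positivity
  rw [le_rpow_inv_iff_of_pos hd.le (by positivity) (by linarith), le_div_iff₀ hρ]
  have hsplit : d ^ q = d ^ (q - 1) * d := by rw [← rpow_add_one hd.ne', sub_add_cancel]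
  exact le_of_mul_le_mul_right (by rw [hsplit] at h; linarith) hd

end Real

section HOProx

variable {E : Type*} [NormedAddCommGroup E] {f : E → EReal} {C : Set E}

theorem toReal_add_le_of_mem_hoProx {p γ : ℝ} {u v z : E} (htop : ∀ y ∈ C, f y ≠ ⊤)
    (hbot : ∀ y ∈ C, f y ≠ ⊥) (hv : v ∈ HOProx f C p γ u) (hz : z ∈ C) :
    (f v).toReal + 1 / (p * γ) * ‖u - v‖ ^ p ≤ (f z).toReal + 1 / (p * γ) * ‖u - z‖ ^ p := by
  have h := hv.2 z hz
  rw [← EReal.coe_toReal (htop v hv.1) (hbot v hv.1), ← EReal.coe_toReal (htop z hz) (hbot z hz)]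
    at h
  exact_mod_cast h

theorem norm_sub_le_of_mem_hoProx {p γ : ℝ} {u v xb : E} (hp : 0 < p) (hγ : 0 < γ)
    (htop : ∀ y ∈ C, f y ≠ ⊤) (hbot : ∀ y ∈ C, f y ≠ ⊥) (hv : v ∈ HOProx f C p γ u)
    (hxb : xb ∈ C) (hmin : IsMinOn f C xb) : ‖u - v‖ ≤ ‖u - xb‖ := by
  have hopt := toReal_add_le_of_mem_hoProx htop hbot hv hxb
  have hfxb : (f xb).toReal ≤ (f v).toReal :=
    EReal.toReal_le_toReal (isMinOn_iff.1 hmin v hv.1) (hbot xb hxb) (htop v hv.1)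
  have hpow : ‖u - v‖ ^ p ≤ ‖u - xb‖ ^ p :=
    le_of_mul_le_mul_left (by linarith) (by positivity : 0 < 1 / (p * γ))
  exact (Real.rpow_le_rpow_iff (norm_nonneg _) (norm_nonneg _) hp).1 hpow

variable [NormedSpace ℝ E]

theorem UnifQuasiconvexOn.toReal_midpoint_add_le {φ : ℝ → EReal} (hC : Convex ℝ C)
    (hquasi : UnifQuasiconvexOn C φ f) (htop : ∀ y ∈ C, f y ≠ ⊤) (hbot : ∀ y ∈ C, f y ≠ ⊥)
    {x y : E} (hx : x ∈ C) (hy : y ∈ C) (hxy : f x ≤ f y) {c : ℝ}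
    (hc : (c : EReal) ≤ φ ‖x - y‖) :
    (f (midpoint ℝ x y)).toReal + c / 4 ≤ (f y).toReal := by
  have hm : midpoint ℝ x y ∈ C := hC.midpoint_mem hx hy
  have h := hquasi hx hy (show (1 / 2 : ℝ) ∈ Icc 0 1 by norm_num)
  have hmid : (1 / 2 : ℝ) • x + (1 - 1 / 2 : ℝ) • y = midpoint ℝ x y := by
    rw [midpoint_eq_smul_add, invOf_eq_inv]; module
  rw [max_eq_right hxy, hmid, ← EReal.coe_toReal (htop _ hm) (hbot _ hm),
    ← EReal.coe_toReal (htop y hy) (hbot y hy)] at h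
  have hcφ := mul_le_mul_of_nonneg_left hc
    (by norm_num : (0 : EReal) ≤ ((1 / 2 * (1 - 1 / 2) : ℝ) : EReal))
  have h' := (add_le_add_right hcφ _).trans h
  rw [← EReal.coe_mul, ← EReal.coe_add, EReal.coe_le_coe_iff] at h'
  linarith

theorem mul_norm_sub_rpow_le_of_mem_hoProx {φ : ℝ → EReal} {ρ q p γ : ℝ} {u v xb : E}
    (hC : Convex ℝ C) (hquasi : UnifQuasiconvexOn C φ f)
    (hlb : ∀ t : ℝ, 0 ≤ t → ((ρ * t ^ q : ℝ) : EReal) ≤ φ t)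
    (htop : ∀ y ∈ C, f y ≠ ⊤) (hbot : ∀ y ∈ C, f y ≠ ⊥) (hxb : xb ∈ C) (hmin : IsMinOn f C xb)
    (hv : v ∈ HOProx f C p γ u) (hp : 1 ≤ p) (hγ : 0 < γ) :
    ρ * ‖v - xb‖ ^ q ≤ 2 ^ p / γ * ‖u - xb‖ ^ (p - 1) * ‖v - xb‖ := by
  set b := ‖u - v‖
  set d := ‖v - xb‖
  set e := ‖u - xb‖
  set z := midpoint ℝ xb v
  have hbe : b ≤ e := norm_sub_le_of_mem_hoProx (by linarith) hγ htop hbot hv hxb hmin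
  have hde : d ≤ b + e := by
    have := norm_sub_le_norm_sub_add_norm_sub v u xb
    rwa [norm_sub_rev v u] at this
  have hz : ‖u - z‖ ≤ b + d / 2 := by
    have hvz : ‖v - z‖ = d / 2 := by
      rw [← dist_eq_norm, dist_right_midpoint, dist_eq_norm, norm_sub_rev, Real.norm_two]
      ring
    linarith [norm_sub_le_norm_sub_add_norm_sub u v z]
  have hfz : (f z).toReal + ρ * d ^ q / 4 ≤ (f v).toReal :=
    hquasi.toReal_midpoint_add_le hC htop hbot hxb hv.1 (isMinOn_iff.1 hmin v hv.1)
      (by rw [norm_sub_rev]; exact hlb d (norm_nonneg _))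
  have hopt := toReal_add_le_of_mem_hoProx htop hbot hv (hC.midpoint_mem hxb hv.1)
  have hmv := Real.rpow_sub_rpow_le_mul_sub (norm_nonneg _)
    (le_add_of_nonneg_right (by positivity) : b ≤ b + d / 2) hp
  rw [add_sub_cancel_left] at hmv
  have hpow : (b + d / 2) ^ (p - 1) ≤ (2 * e) ^ (p - 1) := by gcongr; linarith
  calc ρ * d ^ q ≤ 4 / (p * γ) * (‖u - z‖ ^ p - b ^ p) := by
        rw [div_eq_mul_one_div 4]
        linarith
    _ ≤ 4 / (p * γ) * ((b + d / 2) ^ p - b ^ p) := by gcongr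
    _ ≤ 4 / (p * γ) * (p * (2 * e) ^ (p - 1) * (d / 2)) := by
        gcongr
        exact hmv.trans (by gcongr)
    _ = 2 ^ p / γ * e ^ (p - 1) * d := by
        rw [Real.mul_rpow zero_le_two (norm_nonneg _), Real.rpow_sub_one two_ne_zero]
        field_simp
        ring

end HOProx

theorem statement_19_general (n : ℕ) (f : EuclideanSpace ℝ (Fin n) → EReal)
    (hbot : ∀ x, f x ≠ ⊥)
    (C : Set (EuclideanSpace ℝ (Fin n)))
    (hCconv : Convex ℝ C)
    (hdom : ∀ x ∈ C, f x ≠ ⊤)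
    (φ : ℝ → EReal)
    (hquasi : UnifQuasiconvexOn C φ f)
    (q ρq : ℝ) (hq : 2 ≤ q) (hρq : 0 < ρq)
    (hlb : ∀ t : ℝ, 0 ≤ t → ((ρq * t ^ q : ℝ) : EReal) ≤ φ t)
    (p : ℝ) (hpq : q < p)
    (γmin γmax : ℝ) (hγmin : 0 < γmin)
    (x : ℕ → EuclideanSpace ℝ (Fin n)) (γ : ℕ → ℝ)
    (hγk : ∀ k, γ k ∈ Set.Ioo γmin γmax)
    (hstep : ∀ k, x (k + 1) ∈ HOProx f C p (γ k) (x k))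
    (xb : EuclideanSpace ℝ (Fin n)) (hxbC : xb ∈ C)
    (hxbmin : ∀ y ∈ C, f xb ≤ f y) :
    ∃ K : ℝ, 0 < K ∧
      ∀ k : ℕ, ‖x (k + 1) - xb‖ ≤ K * ‖x k - xb‖ ^ ((p - 1) / (q - 1)) := by
  refine ⟨(2 ^ p / (γmin * ρq)) ^ (q - 1)⁻¹, by positivity, fun k => ?_⟩
  have hγkmin : γmin < γ k := (hγk k).1
  have hγk0 : 0 < γ k := hγmin.trans hγkmin
  have hq1 : 0 < q - 1 := by linarith
  have hcontr := mul_norm_sub_rpow_le_of_mem_hoProx hCconv hquasi hlb hdom (fun y _ => hbot y)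
    hxbC (isMinOn_iff.2 hxbmin) (hstep k) (by linarith) hγk0
  calc ‖x (k + 1) - xb‖
      ≤ (2 ^ p / γ k * ‖x k - xb‖ ^ (p - 1) / ρq) ^ (q - 1)⁻¹ :=
        Real.le_rpow_inv_of_mul_rpow_le_mul (norm_nonneg _) (by positivity) hρq (by linarith) hcontr
    _ = (2 ^ p / (γ k * ρq) * ‖x k - xb‖ ^ (p - 1)) ^ (q - 1)⁻¹ := by ring_nf
    _ ≤ (2 ^ p / (γmin * ρq) * ‖x k - xb‖ ^ (p - 1)) ^ (q - 1)⁻¹ := by gcongr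
    _ = (2 ^ p / (γmin * ρq)) ^ (q - 1)⁻¹ * ‖x k - xb‖ ^ ((p - 1) / (q - 1)) := by
        rw [Real.mul_rpow (by positivity) (by positivity), ← Real.rpow_mul (norm_nonneg _),
          ← div_eq_mul_inv]

/-- **Superlinear convergence.**  Suppose `φ(t) ≥ ρ_q t^q` for all
`t ≥ 0`, with `q ≥ 2`, `ρ_q > 0`, and let `p > q`.  Then for a HiPPA sequence of order
`p` and the unique global minimizer `x̄`, there is `K > 0` with
`‖x^{k+1} − x̄‖ ≤ K·‖x^k − x̄‖^{(p−1)/(q−1)}` for all `k`. -/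
theorem statement_19 (n : ℕ) (f : EuclideanSpace ℝ (Fin n) → EReal)
    (hproper : ∃ x, f x ≠ ⊤) (hbot : ∀ x, f x ≠ ⊥)
    (hlsc : LowerSemicontinuous f) (hcoer : Coercive f)
    (C : Set (EuclideanSpace ℝ (Fin n)))
    (hCclosed : IsClosed C) (hCconv : Convex ℝ C)
    (hdom : ∀ x ∈ C, f x ≠ ⊤)
    (φ : ℝ → EReal) (hφ : IsModulus φ)
    (hquasi : UnifQuasiconvexOn C φ f)
    (q ρq : ℝ) (hq : 2 ≤ q) (hρq : 0 < ρq)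
    (hlb : ∀ t : ℝ, 0 ≤ t → ((ρq * t ^ q : ℝ) : EReal) ≤ φ t)
    (p : ℝ) (hpq : q < p)
    (γmin γmax : ℝ) (hγmin : 0 < γmin) (hγ : γmin < γmax)
    (x : ℕ → EuclideanSpace ℝ (Fin n)) (γ : ℕ → ℝ)
    (hx0 : x 0 ∈ C)
    (hγk : ∀ k, γ k ∈ Set.Ioo γmin γmax)
    (hstep : ∀ k, x (k + 1) ∈ HOProx f C p (γ k) (x k))
    (xb : EuclideanSpace ℝ (Fin n)) (hxbC : xb ∈ C)
    (hxbmin : ∀ y ∈ C, f xb ≤ f y)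
    (hxbuniq : ∀ z ∈ C, (∀ y ∈ C, f z ≤ f y) → z = xb) :
    ∃ K : ℝ, 0 < K ∧
      ∀ k : ℕ, ‖x (k + 1) - xb‖ ≤ K * ‖x k - xb‖ ^ ((p - 1) / (q - 1)) :=
  statement_19_general n f hbot C hCconv hdom φ hquasi q ρq hq hρq hlb p hpq γmin γmax hγmin x γ hγk
    hstep xb hxbC hxbmin
end
end
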